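/- arXiv:1407.1349 — 5 statements merged into one kernel-verified Lean document; each statement's English description precedes it below -/
import Mathlib

section
/- Let B be a unital normed complex algebra with submultiplicative norm and ‖1‖ = 1, and let L ∈ B with ‖L‖ ≤ 1. Let n ∈ ℕ, let E₁ be a nonempty set of μ₁ integers contained in [0, n], and let E₂ be a set of μ₂ ≥ 1 consecutive nonnegative integers. Set u_i = (1/μ_i) Σ_{j ∈ E_i} L^j for i = 1, 2. Then ‖u₁u₂ − u₂‖ ≤ 2n/μ₂. -/
lemma pow_norm_le_one {B : Type*} [NormedRing B] [NormOneClass B]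
    (L : B) (hL : ‖L‖ ≤ 1) (i : ℕ) : ‖L ^ i‖ ≤ 1 := by
  have h : ‖L ^ i‖ ≤ ‖L‖ ^ i := by
    rcases Nat.eq_zero_or_pos i with h | h
    · simp [h]
    · exact norm_pow_le' L h
  exact h.trans (pow_le_one₀ (norm_nonneg L) hL)

lemma sum_pow_norm_le {B : Type*} [NormedRing B] [NormOneClass B]
    (L : B) (hL : ‖L‖ ≤ 1) (a j : ℕ) :
    ‖∑ i ∈ Finset.Ico a (a + j), L ^ i‖ ≤ j := by
  calc ‖∑ i ∈ Finset.Ico a (a + j), L ^ i‖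
      ≤ ∑ i ∈ Finset.Ico a (a + j), ‖L ^ i‖ := norm_sum_le _ _
    _ ≤ ∑ i ∈ Finset.Ico a (a + j), (1 : ℝ) :=
        Finset.sum_le_sum fun i _ => pow_norm_le_one L hL i
    _ = j := by simp

/-- Let `B` be a unital normed complex algebra with submultiplicative norm
and `‖1‖ = 1`, and `L ∈ B` with `‖L‖ ≤ 1`. Let `E₁` be a nonempty set of `μ₁` integers
contained in `[0, n]`, and let `E₂` be a set of `μ₂ ≥ 1` consecutive nonnegative integers.
If `uᵢ = μᵢ⁻¹ ∑_{j ∈ Eᵢ} L^j` then `‖u₁ u₂ − u₂‖ ≤ 2n/μ₂`. -/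
theorem stmt2 {B : Type*} [NormedRing B] [NormOneClass B] [NormedAlgebra ℂ B]
    (L : B) (hL : ‖L‖ ≤ 1) (n : ℕ)
    (E₁ : Finset ℕ) (hE₁ : E₁.Nonempty) (hE₁n : ∀ j ∈ E₁, j ≤ n)
    (m₀ μ₂ : ℕ) (hμ₂ : 1 ≤ μ₂)
    (u₁ u₂ : B)
    (hu₁ : u₁ = (E₁.card : ℂ)⁻¹ • ∑ j ∈ E₁, L ^ j)
    (hu₂ : u₂ = (μ₂ : ℂ)⁻¹ • ∑ j ∈ Finset.Ico m₀ (m₀ + μ₂), L ^ j) :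
    ‖u₁ * u₂ - u₂‖ ≤ 2 * n / μ₂ := by
  have hμ₂' : (0:ℝ) < μ₂ := by exact_mod_cast hμ₂
  have key : ∀ j ∈ E₁, ‖L ^ j * u₂ - u₂‖ ≤ 2 * n / μ₂ := by
    intro j hj
    have hjn : j ≤ n := hE₁n j hj
    -- L^j * u₂ = μ₂⁻¹ • ∑_{i ∈ Ico (m₀+j) (m₀+j+μ₂)} L^i
    have h1 : L ^ j * u₂ = (μ₂ : ℂ)⁻¹ • ∑ i ∈ Finset.Ico (m₀ + j) (m₀ + j + μ₂), L ^ i := by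
      rw [hu₂, mul_smul_comm, Finset.mul_sum]
      congr 1
      have hre : ∀ i ∈ Finset.Ico m₀ (m₀ + μ₂), L ^ j * L ^ i = L ^ (i + j) :=
        fun i _ => by rw [← pow_add, add_comm]
      rw [Finset.sum_congr rfl hre, Finset.sum_Ico_add' (fun i => L ^ i),
        show m₀ + μ₂ + j = m₀ + j + μ₂ from by ring]
    have h2 : L ^ j * u₂ - u₂ = (μ₂ : ℂ)⁻¹ •
        ((∑ i ∈ Finset.Ico (m₀ + μ₂) (m₀ + μ₂ + j), L ^ i)
          - ∑ i ∈ Finset.Ico m₀ (m₀ + j), L ^ i) := by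
      rw [h1, hu₂, ← smul_sub]
      congr 1
      have e1 : ∑ i ∈ Finset.Ico m₀ (m₀ + j), (L ^ i)
          + ∑ i ∈ Finset.Ico (m₀ + j) (m₀ + j + μ₂), L ^ i
          = ∑ i ∈ Finset.Ico m₀ (m₀ + j + μ₂), L ^ i :=
        Finset.sum_Ico_consecutive _ (Nat.le_add_right _ _) (Nat.le_add_right _ _)
      have e2 : ∑ i ∈ Finset.Ico m₀ (m₀ + μ₂), (L ^ i)
          + ∑ i ∈ Finset.Ico (m₀ + μ₂) (m₀ + μ₂ + j), L ^ i
          = ∑ i ∈ Finset.Ico m₀ (m₀ + μ₂ + j), L ^ i :=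
        Finset.sum_Ico_consecutive _ (Nat.le_add_right _ _) (Nat.le_add_right _ _)
      have e3 : m₀ + j + μ₂ = m₀ + μ₂ + j := by ring
      rw [e3] at e1
      rw [← e2] at e1
      rw [sub_eq_sub_iff_add_eq_add, add_comm (∑ i ∈ Finset.Ico (m₀ + j) (m₀ + j + μ₂), L ^ i),
        add_comm (∑ i ∈ Finset.Ico (m₀ + μ₂) (m₀ + μ₂ + j), L ^ i)]
      simpa [show m₀ + μ₂ + j = m₀ + j + μ₂ from by ring] using e1
    rw [h2]
    rw [norm_smul]
    have hn : ‖(μ₂ : ℂ)⁻¹‖ = (μ₂ : ℝ)⁻¹ := by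
      simp
    rw [hn]
    have hbound : ‖(∑ i ∈ Finset.Ico (m₀ + μ₂) (m₀ + μ₂ + j), L ^ i)
        - ∑ i ∈ Finset.Ico m₀ (m₀ + j), L ^ i‖ ≤ 2 * j := by
      calc _ ≤ ‖∑ i ∈ Finset.Ico (m₀ + μ₂) (m₀ + μ₂ + j), L ^ i‖
            + ‖∑ i ∈ Finset.Ico m₀ (m₀ + j), L ^ i‖ := norm_sub_le _ _
        _ ≤ (j : ℝ) + j := add_le_add (sum_pow_norm_le L hL _ _) (sum_pow_norm_le L hL _ _)
        _ = 2 * j := by ring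
    calc (μ₂ : ℝ)⁻¹ * ‖_‖ ≤ (μ₂ : ℝ)⁻¹ * (2 * j) := by
          exact mul_le_mul_of_nonneg_left hbound (by positivity)
      _ ≤ (μ₂ : ℝ)⁻¹ * (2 * n) := by
          gcongr
      _ = 2 * n / μ₂ := by field_simp
  have hc : (0:ℝ) < E₁.card := by exact_mod_cast Finset.card_pos.mpr hE₁
  have hcC : (E₁.card : ℂ) ≠ 0 := by exact_mod_cast (Finset.card_pos.mpr hE₁).ne'
  have hdecomp : u₁ * u₂ - u₂ = (E₁.card : ℂ)⁻¹ • ∑ j ∈ E₁, (L ^ j * u₂ - u₂) := by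
    rw [Finset.sum_sub_distrib, smul_sub, Finset.sum_const, hu₁, smul_mul_assoc,
      Finset.sum_mul]
    congr 1
    rw [← Nat.cast_smul_eq_nsmul ℂ, ← smul_assoc, smul_eq_mul,
      inv_mul_cancel₀ hcC, one_smul]
  rw [hdecomp, norm_smul]
  have hn : ‖(E₁.card : ℂ)⁻¹‖ = (E₁.card : ℝ)⁻¹ := by simp
  rw [hn]
  calc (E₁.card : ℝ)⁻¹ * ‖∑ j ∈ E₁, (L ^ j * u₂ - u₂)‖
      ≤ (E₁.card : ℝ)⁻¹ * ∑ j ∈ E₁, ‖L ^ j * u₂ - u₂‖ := by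
        exact mul_le_mul_of_nonneg_left (norm_sum_le _ _) (by positivity)
    _ ≤ (E₁.card : ℝ)⁻¹ * ∑ j ∈ E₁, (2 * (n:ℝ) / μ₂) := by
        exact mul_le_mul_of_nonneg_left (Finset.sum_le_sum key) (by positivity)
    _ = 2 * n / μ₂ := by
        rw [Finset.sum_const, nsmul_eq_mul]
        field_simp
end

section
/- For all integers r ≥ 1, t ≥ 2 and k ≥ 2tr one has sup_n p_n(u_{n,k} u_{n,r} − u_{n,r}) ≤ 2/t. Consequently sup_n p_n(u_{n,k} u_{n,r} − u_{n,r}) → 0 and sup_n p_n(u_{n,r} u_{n,k} − u_{n,r}) → 0 as k → ∞ (the matrices u_{n,k} and u_{n,r} commute, being polynomials in L_n), so that the tuple u_r = (u_{n,r})_n belongs to A. -/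
noncomputable section

/-- The operator norm on `M_n(ℂ)` acting on `ℓ²(Fin n)`. -/
def opNorm {n : ℕ} (x : Matrix (Fin n) (Fin n) ℂ) : ℝ :=
  ‖LinearMap.toContinuousLinearMap (Matrix.toEuclideanLin x)‖

/-- The diagonal matrix `d_n` whose `k`-th diagonal entry is `c_n ^ k` (for `1 ≤ k ≤ n`). -/
def dMat (c : ℕ → ℝ) (n : ℕ) : Matrix (Fin n) (Fin n) ℂ :=
  Matrix.diagonal fun k => ((c n ^ ((k : ℕ) + 1) : ℝ) : ℂ)

/-- The inverse `d_n⁻¹`. -/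
def dMatInv (c : ℕ → ℝ) (n : ℕ) : Matrix (Fin n) (Fin n) ℂ :=
  Matrix.diagonal fun k => (((c n ^ ((k : ℕ) + 1))⁻¹ : ℝ) : ℂ)

/-- The norm `p_n(x) = max {‖x‖, ‖d_n x d_n⁻¹‖}`. -/
def pnorm (c : ℕ → ℝ) (n : ℕ) (x : Matrix (Fin n) (Fin n) ℂ) : ℝ :=
  max (opNorm x) (opNorm (dMat c n * x * dMatInv c n))

/-- The left shift `L_n`: `L_n e_{k+1} = e_k`, `L_n e_1 = 0`. -/
def Lmat (n : ℕ) : Matrix (Fin n) (Fin n) ℂ :=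
  Matrix.of fun i j => if (i : ℕ) + 1 = (j : ℕ) then 1 else 0

/-- The integer interval `E_{n,k} = {i ∈ ℕ : n/k ≤ i ≤ 2n/k}`. -/
def Eset (n k : ℕ) : Finset ℕ :=
  (Finset.range (2 * n + 1)).filter fun i => (n : ℝ) / k ≤ i ∧ (i : ℝ) ≤ 2 * n / k

/-- `u_{n,k} = μ_{n,k}⁻¹ ∑_{i ∈ E_{n,k}} L_n^i` if `k ≤ n`, and `u_{n,k} = I_n` if `n < k`. -/
def umat (n k : ℕ) : Matrix (Fin n) (Fin n) ℂ :=
  if k ≤ n then ((Eset n k).card : ℂ)⁻¹ • ∑ i ∈ Eset n k, Lmat n ^ i else 1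

/-- Membership in the algebra `A`: `p(T) < ∞` and
`sup_n p_n(T_n u_{n,k} − T_n) + sup_n p_n(u_{n,k} T_n − T_n) → 0` as `k → ∞`. -/
def memA (c : ℕ → ℝ) (T : ∀ n, Matrix (Fin n) (Fin n) ℂ) : Prop :=
  (∃ M : ℝ, ∀ n, pnorm c n (T n) ≤ M) ∧
  ∀ ε : ℝ, 0 < ε → ∃ K : ℕ, ∀ k, K ≤ k → ∀ n,
    pnorm c n (T n * umat n k - T n) + pnorm c n (umat n k * T n - T n) ≤ ε

/-- `p(T) = sup_n p_n(T_n)`. -/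
def pA (c : ℕ → ℝ) (T : ∀ n, Matrix (Fin n) (Fin n) ℂ) : ℝ :=
  ⨆ n, pnorm c n (T n)

/-- The upper triangular part `Δ̄_U x`. -/
def upperT {n : ℕ} (x : Matrix (Fin n) (Fin n) ℂ) : Matrix (Fin n) (Fin n) ℂ :=
  Matrix.of fun i j => if i ≤ j then x i j else 0

/-- The strictly lower triangular part `Δ_L x`. -/
def lowerT {n : ℕ} (x : Matrix (Fin n) (Fin n) ℂ) : Matrix (Fin n) (Fin n) ℂ :=
  Matrix.of fun i j => if j < i then x i j else 0

/-! ### Auxiliary lemmas -/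

open scoped Matrix.Norms.L2Operator Matrix

lemma opNorm_eq {n : ℕ} (x : Matrix (Fin n) (Fin n) ℂ) : opNorm x = ‖x‖ := rfl

/-- Conjugation by the diagonal `d`. -/
def conjD (c : ℕ → ℝ) (n : ℕ) (x : Matrix (Fin n) (Fin n) ℂ) : Matrix (Fin n) (Fin n) ℂ :=
  dMat c n * x * dMatInv c n

lemma pnorm_def (c : ℕ → ℝ) (n : ℕ) (x : Matrix (Fin n) (Fin n) ℂ) :
    pnorm c n x = max ‖x‖ ‖conjD c n x‖ := rfl

variable {c : ℕ → ℝ} {n : ℕ}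

lemma dMat_mul_dMatInv (hc : c n ≠ 0) : dMat c n * dMatInv c n = 1 := by
  rw [dMat, dMatInv, Matrix.diagonal_mul_diagonal]
  ext i j
  by_cases h : i = j
  · subst h
    have hcC : ((c n : ℂ)) ≠ 0 := by exact_mod_cast hc
    simp only [Matrix.diagonal_apply_eq, Matrix.one_apply_eq, Complex.ofReal_pow,
      Complex.ofReal_inv]
    exact mul_inv_cancel₀ (pow_ne_zero _ hcC)
  · simp [Matrix.diagonal_apply_ne _ h, Matrix.one_apply_ne h]

lemma dMatInv_mul_dMat (hc : c n ≠ 0) : dMatInv c n * dMat c n = 1 := by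
  rw [dMat, dMatInv, Matrix.diagonal_mul_diagonal]
  ext i j
  by_cases h : i = j
  · subst h
    have hcC : ((c n : ℂ)) ≠ 0 := by exact_mod_cast hc
    simp only [Matrix.diagonal_apply_eq, Matrix.one_apply_eq, Complex.ofReal_pow,
      Complex.ofReal_inv]
    exact inv_mul_cancel₀ (pow_ne_zero _ hcC)
  · simp [Matrix.diagonal_apply_ne _ h, Matrix.one_apply_ne h]

lemma conjD_one (hc : c n ≠ 0) : conjD c n 1 = 1 := by
  rw [conjD, mul_one, dMat_mul_dMatInv hc]

lemma conjD_mul (hc : c n ≠ 0) (x y : Matrix (Fin n) (Fin n) ℂ) :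
    conjD c n (x * y) = conjD c n x * conjD c n y := by
  unfold conjD
  rw [show dMat c n * x * dMatInv c n * (dMat c n * y * dMatInv c n)
      = dMat c n * x * (dMatInv c n * dMat c n) * (y * dMatInv c n) by noncomm_ring,
    dMatInv_mul_dMat hc, mul_one]
  noncomm_ring

lemma conjD_sub (x y : Matrix (Fin n) (Fin n) ℂ) :
    conjD c n (x - y) = conjD c n x - conjD c n y := by
  unfold conjD; noncomm_ring

lemma conjD_smul (a : ℂ) (x : Matrix (Fin n) (Fin n) ℂ) :
    conjD c n (a • x) = a • conjD c n x := by
  unfold conjD; rw [mul_smul_comm, smul_mul_assoc]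

lemma conjD_sum {ι : Type*} (s : Finset ι) (f : ι → Matrix (Fin n) (Fin n) ℂ) :
    conjD c n (∑ i ∈ s, f i) = ∑ i ∈ s, conjD c n (f i) := by
  unfold conjD; rw [Finset.mul_sum, Finset.sum_mul]

lemma pnorm_nonneg' (x : Matrix (Fin n) (Fin n) ℂ) : 0 ≤ pnorm c n x :=
  le_trans (norm_nonneg x) (le_max_left _ _)

lemma pnorm_zero : pnorm c n 0 = 0 := by
  rw [pnorm_def]
  simp [conjD]

lemma pnorm_smul (a : ℂ) (x : Matrix (Fin n) (Fin n) ℂ) :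
    pnorm c n (a • x) = ‖a‖ * pnorm c n x := by
  rw [pnorm_def, pnorm_def, conjD_smul, norm_smul, norm_smul]
  rw [mul_max_of_nonneg _ _ (norm_nonneg a)]

lemma pnorm_sub_le (x y : Matrix (Fin n) (Fin n) ℂ) :
    pnorm c n (x - y) ≤ pnorm c n x + pnorm c n y := by
  rw [pnorm_def, pnorm_def, pnorm_def, conjD_sub]
  refine max_le ?_ ?_
  · exact le_trans (norm_sub_le _ _) (add_le_add (le_max_left _ _) (le_max_left _ _))
  · exact le_trans (norm_sub_le _ _) (add_le_add (le_max_right _ _) (le_max_right _ _))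

lemma pnorm_sum_le {ι : Type*} (s : Finset ι) (f : ι → Matrix (Fin n) (Fin n) ℂ) :
    pnorm c n (∑ i ∈ s, f i) ≤ ∑ i ∈ s, pnorm c n (f i) := by
  rw [pnorm_def, conjD_sum]
  refine max_le ?_ ?_
  · exact le_trans (norm_sum_le _ _) (Finset.sum_le_sum fun i _ => le_max_left _ _)
  · exact le_trans (norm_sum_le _ _) (Finset.sum_le_sum fun i _ => le_max_right _ _)

lemma opNorm_one_le (n : ℕ) : ‖(1 : Matrix (Fin n) (Fin n) ℂ)‖ ≤ 1 := by
  rw [Matrix.cstar_norm_def, map_one, ContinuousLinearMap.one_def]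
  exact ContinuousLinearMap.norm_id_le

lemma pnorm_one_le (hc : c n ≠ 0) : pnorm c n 1 ≤ 1 := by
  rw [pnorm_def, conjD_one hc]
  exact max_le (opNorm_one_le n) (opNorm_one_le n)

/-! ### Norm bound for the shift -/

lemma Lmat_mulVec (n : ℕ) (v : Fin n → ℂ) (i : Fin n) :
    (Lmat n *ᵥ v) i = if h : (i:ℕ)+1 < n then v ⟨(i:ℕ)+1, h⟩ else 0 := by
  simp only [Lmat, Matrix.mulVec, dotProduct, Matrix.of_apply, ite_mul, one_mul, zero_mul]
  rcases lt_or_ge ((i:ℕ)+1) n with h | h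
  · rw [dif_pos h]
    rw [show (fun j : Fin n => if (i:ℕ)+1 = (j:ℕ) then v j else 0)
        = fun j => if (⟨(i:ℕ)+1, h⟩ : Fin n) = j then v j else 0 from
      funext fun j => by simp [Fin.ext_iff]]
    simp
  · rw [dif_neg (by omega)]
    refine Finset.sum_eq_zero fun j _ => if_neg (by have := j.isLt; omega)

lemma sum_sq_mulVec_le (n : ℕ) (v : Fin n → ℂ) :
    ∑ i, ‖(Lmat n *ᵥ v) i‖^2 ≤ ∑ i, ‖v i‖^2 := by
  classical
  set e : Fin n → Fin n := fun i => if h : (i:ℕ)+1 < n then (⟨(i:ℕ)+1, h⟩ : Fin n) else i with he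
  have h1 : ∀ i : Fin n, ‖(Lmat n *ᵥ v) i‖^2 = if (i:ℕ)+1 < n then ‖v (e i)‖^2 else 0 := by
    intro i
    rw [Lmat_mulVec]
    by_cases h : (i:ℕ)+1 < n <;> simp [h, he]
  calc ∑ i, ‖(Lmat n *ᵥ v) i‖^2
      = ∑ i ∈ Finset.univ.filter (fun i : Fin n => (i:ℕ)+1 < n), ‖v (e i)‖^2 := by
        rw [Finset.sum_filter]; exact Finset.sum_congr rfl fun i _ => h1 i
    _ = ∑ j ∈ (Finset.univ.filter (fun i : Fin n => (i:ℕ)+1 < n)).image e, ‖v j‖^2 := by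
        rw [Finset.sum_image]
        intro x hx y hy hxy
        simp only [Finset.mem_coe, Finset.mem_filter] at hx hy
        simp only [he, dif_pos hx.2, dif_pos hy.2, Fin.ext_iff] at hxy ⊢
        omega
    _ ≤ ∑ j, ‖v j‖^2 := by
        refine Finset.sum_le_sum_of_subset_of_nonneg (Finset.subset_univ _) ?_
        intro j _ _; positivity

lemma norm_Lmat_le (n : ℕ) : ‖Lmat n‖ ≤ 1 := by
  rw [Matrix.l2_opNorm_def]
  refine ContinuousLinearMap.opNorm_le_bound _ zero_le_one fun x => ?_
  rw [one_mul, LinearEquiv.trans_apply, LinearMap.coe_toContinuousLinearMap',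
    Matrix.toEuclideanLin_apply, EuclideanSpace.norm_eq, EuclideanSpace.norm_eq]
  refine Real.sqrt_le_sqrt ?_
  simpa using sum_sq_mulVec_le n ((WithLp.equiv 2 (Fin n → ℂ)) x)

lemma norm_Lpow_le (i : ℕ) : ‖Lmat n ^ i‖ ≤ 1 := by
  induction i with
  | zero => simpa using opNorm_one_le n
  | succ m ih =>
      rw [pow_succ]
      exact le_trans (norm_mul_le _ _) (mul_le_one₀ ih (norm_nonneg _) (norm_Lmat_le n))

lemma conjD_Lmat (hc : c n ≠ 0) :
    conjD c n (Lmat n) = (((c n)⁻¹ : ℝ) : ℂ) • Lmat n := by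
  have hcC : ((c n : ℂ)) ≠ 0 := by exact_mod_cast hc
  unfold conjD dMat dMatInv Lmat
  ext i j
  rw [Matrix.mul_diagonal, Matrix.diagonal_mul]
  simp only [Matrix.of_apply, Matrix.smul_apply, Complex.ofReal_pow, Complex.ofReal_inv,
    smul_eq_mul]
  by_cases h : (i:ℕ) + 1 = (j:ℕ)
  · simp only [h, if_pos rfl, mul_one]
    rw [pow_succ]
    field_simp
  · simp [h]

lemma conjD_Lpow (hc : c n ≠ 0) (i : ℕ) :
    conjD c n (Lmat n ^ i) = ((((c n)⁻¹ : ℝ) : ℂ) ^ i) • Lmat n ^ i := by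
  induction i with
  | zero => simpa using conjD_one hc
  | succ m ih =>
      rw [pow_succ, conjD_mul hc, ih, conjD_Lmat hc, smul_mul_assoc, mul_smul_comm, smul_smul, ← pow_succ]

lemma pnorm_Lpow_le (hc1 : 1 < c n) (i : ℕ) : pnorm c n (Lmat n ^ i) ≤ 1 := by
  have hc0 : (0:ℝ) < c n := lt_trans zero_lt_one hc1
  have hc : c n ≠ 0 := ne_of_gt hc0
  rw [pnorm_def, conjD_Lpow hc]
  refine max_le (norm_Lpow_le i) ?_
  rw [norm_smul]
  refine mul_le_one₀ ?_ (norm_nonneg _) (norm_Lpow_le i)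
  rw [norm_pow]
  refine pow_le_one₀ (norm_nonneg _) ?_
  rw [Complex.norm_real, Real.norm_eq_abs, abs_of_nonneg (inv_nonneg.2 (le_of_lt hc0))]
  rw [inv_le_one_iff₀]
  right; exact le_of_lt hc1

/-! ### The sets `E_{n,k}` -/

lemma Eset_eq (n k : ℕ) (hk : 1 ≤ k) :
    Eset n k = Finset.Icc ⌈(n:ℝ)/k⌉₊ ⌊2*(n:ℝ)/k⌋₊ := by
  have hk0 : (0:ℝ) < k := by exact_mod_cast hk
  ext i
  simp only [Eset, Finset.mem_filter, Finset.mem_range, Finset.mem_Icc]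
  constructor
  · rintro ⟨-, h1, h2⟩
    exact ⟨Nat.ceil_le.2 h1, Nat.le_floor h2⟩
  · rintro ⟨h1, h2⟩
    have h1' : (n:ℝ)/k ≤ i := le_trans (Nat.le_ceil _) (by exact_mod_cast h1)
    have h2' : (i:ℝ) ≤ 2*(n:ℝ)/k :=
      le_trans (by exact_mod_cast h2) (Nat.floor_le (by positivity))
    refine ⟨?_, h1', h2'⟩
    have hle : (i:ℝ) ≤ 2*(n:ℝ) := by
      refine h2'.trans ?_
      rw [div_le_iff₀ hk0]
      have h1k : (1:ℝ) ≤ k := by exact_mod_cast hk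
      nlinarith [Nat.cast_nonneg (α := ℝ) n]
    have : i ≤ 2*n := by exact_mod_cast hle
    omega

lemma Eset_nonempty_bounds {n k : ℕ} (hk : 1 ≤ k) (hkn : k ≤ n) :
    ⌈(n:ℝ)/k⌉₊ ≤ ⌊2*(n:ℝ)/k⌋₊ := by
  have hk0 : (0:ℝ) < k := by exact_mod_cast hk
  have hx1 : (1:ℝ) ≤ (n:ℝ)/k := by
    rw [le_div_iff₀ hk0, one_mul]
    exact_mod_cast hkn
  refine Nat.le_floor ?_
  have h1 : (⌈(n:ℝ)/k⌉₊ : ℝ) < (n:ℝ)/k + 1 :=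
    Nat.ceil_lt_add_one (by linarith)
  have : (n:ℝ)/k + 1 ≤ 2*(n:ℝ)/k := by
    rw [mul_div_assoc]
    linarith
  linarith

lemma Eset_card_pos {n k : ℕ} (hk : 1 ≤ k) (hkn : k ≤ n) : 0 < (Eset n k).card := by
  rw [Eset_eq n k hk]
  rw [Nat.card_Icc]
  have := Eset_nonempty_bounds hk hkn
  omega

lemma Eset_card_ge {n r : ℕ} (hr : 1 ≤ r) (hrn : r ≤ n) :
    ⌊(n:ℝ)/r⌋₊ ≤ (Eset n r).card := by
  have hr0 : (0:ℝ) < r := by exact_mod_cast hr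
  rw [Eset_eq n r hr, Nat.card_Icc]
  have hb : 2 * ⌊(n:ℝ)/r⌋₊ ≤ ⌊2*(n:ℝ)/r⌋₊ := by
    refine Nat.le_floor ?_
    have := Nat.floor_le (show (0:ℝ) ≤ (n:ℝ)/r by positivity)
    push_cast
    rw [mul_div_assoc]
    linarith
  have ha : ⌈(n:ℝ)/r⌉₊ ≤ ⌊(n:ℝ)/r⌋₊ + 1 := Nat.ceil_le_floor_add_one _
  omega

lemma mem_Eset_le {n k i : ℕ} (hi : i ∈ Eset n k) : (i:ℝ) ≤ 2*(n:ℝ)/k := by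
  simp only [Eset, Finset.mem_filter] at hi
  exact hi.2.2

/-! ### Key estimates -/

lemma pnorm_sum_Lpow_le (hc1 : 1 < c n) (s : Finset ℕ) :
    pnorm c n (∑ j ∈ s, Lmat n ^ j) ≤ s.card := by
  refine le_trans (pnorm_sum_le s _) ?_
  calc ∑ j ∈ s, pnorm c n (Lmat n ^ j) ≤ ∑ _j ∈ s, 1 :=
        Finset.sum_le_sum fun j _ => pnorm_Lpow_le hc1 j
    _ = s.card := by simp

lemma shift_bound (hc1 : 1 < c n) (a b i : ℕ) :
    pnorm c n ((∑ j ∈ Finset.Icc (a+i) (b+i), Lmat n ^ j) - ∑ j ∈ Finset.Icc a b, Lmat n ^ j)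
      ≤ 2 * i := by
  classical
  rw [← Finset.sum_sdiff_sub_sum_sdiff]
  refine le_trans (pnorm_sub_le _ _) ?_
  have h1 : Finset.Icc (a+i) (b+i) \ Finset.Icc a b ⊆ Finset.Ioc b (b+i) := by
    intro x hx
    simp only [Finset.mem_sdiff, Finset.mem_Icc, Finset.mem_Ioc, not_and, not_le] at hx ⊢
    omega
  have h2 : Finset.Icc a b \ Finset.Icc (a+i) (b+i) ⊆ Finset.Ico a (a+i) := by
    intro x hx
    simp only [Finset.mem_sdiff, Finset.mem_Icc, Finset.mem_Ico, not_and, not_le] at hx ⊢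
    omega
  have c1 : ((Finset.Icc (a+i) (b+i) \ Finset.Icc a b).card : ℝ) ≤ i := by
    have h := Finset.card_le_card h1
    rw [Nat.card_Ioc] at h
    have : (Finset.Icc (a+i) (b+i) \ Finset.Icc a b).card ≤ i := by omega
    exact_mod_cast this
  have c2 : ((Finset.Icc a b \ Finset.Icc (a+i) (b+i)).card : ℝ) ≤ i := by
    have h := Finset.card_le_card h2
    rw [Nat.card_Ico] at h
    have : (Finset.Icc a b \ Finset.Icc (a+i) (b+i)).card ≤ i := by omega
    exact_mod_cast this
  have b1 := pnorm_sum_Lpow_le (c := c) hc1 (Finset.Icc (a+i) (b+i) \ Finset.Icc a b)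
  have b2 := pnorm_sum_Lpow_le (c := c) hc1 (Finset.Icc a b \ Finset.Icc (a+i) (b+i))
  linarith

lemma single_term (hc1 : 1 < c n) {r : ℕ} (hr : 1 ≤ r) (hrn : r ≤ n) {t i : ℕ}
    (ht : 1 ≤ t) (hti : t * i ≤ (Eset n r).card) :
    pnorm c n (Lmat n ^ i * umat n r - umat n r) ≤ 2 / (t:ℝ) := by
  classical
  have ht0 : (0:ℝ) < t := by exact_mod_cast ht
  set aa := ⌈(n:ℝ)/r⌉₊ with haa
  set bb := ⌊2*(n:ℝ)/r⌋₊ with hbb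
  have hE : Eset n r = Finset.Icc aa bb := Eset_eq n r hr
  set μ := (Eset n r).card with hμdef
  have hμ : 0 < μ := Eset_card_pos hr hrn
  have hμ0 : (0:ℝ) < μ := by exact_mod_cast hμ
  have hμC : ((μ:ℕ) : ℂ) ≠ 0 := by exact_mod_cast Nat.pos_iff_ne_zero.1 hμ
  have hA : ∑ j ∈ Finset.Icc (aa+i) (bb+i), Lmat n ^ j
      = ∑ j ∈ Finset.Icc aa bb, Lmat n ^ (j+i) := by
    rw [← Finset.map_add_right_Icc, Finset.sum_map]
    rfl
  have hkey : Lmat n ^ i * umat n r - umat n r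
      = ((μ:ℕ) : ℂ)⁻¹ • ((∑ j ∈ Finset.Icc (aa+i) (bb+i), Lmat n ^ j)
          - ∑ j ∈ Finset.Icc aa bb, Lmat n ^ j) := by
    rw [hA, umat, if_pos hrn, ← hμdef, ← hE, mul_smul_comm, Finset.mul_sum, smul_sub]
    congr 1
    rw [hE]
    refine congrArg _ (Finset.sum_congr rfl fun j _ => ?_)
    rw [← pow_add, add_comm]
  rw [hkey, pnorm_smul]
  have hb := shift_bound (c := c) hc1 aa bb i
  have hnorm : ‖((μ:ℕ) : ℂ)⁻¹‖ = (μ:ℝ)⁻¹ := by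
    rw [norm_inv]
    norm_num
  rw [hnorm]
  have hμi : (t:ℝ) * i ≤ μ := by exact_mod_cast hti
  have hp := pnorm_nonneg' (c := c) (n := n)
    ((∑ j ∈ Finset.Icc (aa+i) (bb+i), Lmat n ^ j) - ∑ j ∈ Finset.Icc aa bb, Lmat n ^ j)
  have step : (μ:ℝ)⁻¹ * pnorm c n ((∑ j ∈ Finset.Icc (aa+i) (bb+i), Lmat n ^ j)
      - ∑ j ∈ Finset.Icc aa bb, Lmat n ^ j) ≤ (μ:ℝ)⁻¹ * (2*i) := by
    exact mul_le_mul_of_nonneg_left hb (by positivity)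
  refine le_trans step ?_
  rw [inv_mul_eq_div, div_le_div_iff₀ hμ0 ht0]
  have hi0 : (0:ℝ) ≤ i := by positivity
  nlinarith

lemma key_est (hone : ∀ m, 1 < c m) {r t k : ℕ} (hr : 1 ≤ r) (ht : 2 ≤ t) (hk : 2*t*r ≤ k)
    (n : ℕ) : pnorm c n (umat n k * umat n r - umat n r) ≤ 2 / (t:ℝ) := by
  classical
  have htpos : 0 < t := by omega
  have ht0 : (0:ℝ) < t := by exact_mod_cast htpos
  by_cases hkn : k ≤ n
  · -- main case
    have htr : 0 < 2*t*r := by positivity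
    have hk1 : 1 ≤ k := le_trans htr hk
    have hrn : r ≤ n := le_trans (le_trans (Nat.le_mul_of_pos_left r (by positivity)) hk) hkn
    have hν : 0 < (Eset n k).card := Eset_card_pos hk1 hkn
    set ν := (Eset n k).card with hνdef
    have hν0 : (0:ℝ) < ν := by exact_mod_cast hν
    have hνC : ((ν:ℕ) : ℂ) ≠ 0 := by exact_mod_cast Nat.pos_iff_ne_zero.1 hν
    have hkey : umat n k * umat n r - umat n r
        = ((ν:ℕ) : ℂ)⁻¹ • ∑ i ∈ Eset n k, (Lmat n ^ i * umat n r - umat n r) := by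
      rw [Finset.sum_sub_distrib, Finset.sum_const, smul_sub, ← Finset.sum_mul]
      rw [show umat n k = ((ν:ℕ) : ℂ)⁻¹ • ∑ i ∈ Eset n k, Lmat n ^ i from by
        rw [umat, if_pos hkn]]
      rw [smul_mul_assoc, ← Nat.cast_smul_eq_nsmul ℂ, smul_smul, inv_mul_cancel₀ hνC, one_smul]
    rw [hkey, pnorm_smul]
    have hnorm : ‖((ν:ℕ) : ℂ)⁻¹‖ = (ν:ℝ)⁻¹ := by rw [norm_inv]; norm_num
    rw [hnorm]
    have hterm : ∀ i ∈ Eset n k, pnorm c n (Lmat n ^ i * umat n r - umat n r) ≤ 2 / (t:ℝ) := by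
      intro i hi
      refine single_term (hone n) hr hrn (le_trans one_le_two ht) ?_
      -- t * i ≤ (Eset n r).card
      have hiR : (i:ℝ) ≤ 2*(n:ℝ)/k := mem_Eset_le hi
      have hk0 : (0:ℝ) < k := by exact_mod_cast hk1
      have htr0 : (0:ℝ) < (2*t*r : ℕ) := by exact_mod_cast htr
      have hch : 2*(n:ℝ)/k ≤ 2*(n:ℝ)/((2*t*r : ℕ):ℝ) := by
        apply div_le_div_of_nonneg_left (by positivity) htr0
        exact_mod_cast hk
      have heq : (t:ℝ) * (2*(n:ℝ)/((2*t*r : ℕ):ℝ)) = (n:ℝ)/r := by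
        have htne : (t:ℝ) ≠ 0 := ne_of_gt ht0
        have hrne : (r:ℝ) ≠ 0 := by
          have : (0:ℝ) < r := by exact_mod_cast hr
          exact ne_of_gt this
        push_cast
        field_simp
      have hfloor : (t:ℕ) * i ≤ ⌊(n:ℝ)/r⌋₊ := by
        refine Nat.le_floor ?_
        push_cast
        calc (t:ℝ) * i ≤ (t:ℝ) * (2*(n:ℝ)/k) :=
              mul_le_mul_of_nonneg_left hiR (le_of_lt ht0)
          _ ≤ (t:ℝ) * (2*(n:ℝ)/((2*t*r : ℕ):ℝ)) :=
              mul_le_mul_of_nonneg_left hch (le_of_lt ht0)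
          _ = (n:ℝ)/r := heq
      exact le_trans hfloor (Eset_card_ge hr hrn)
    have hsum : pnorm c n (∑ i ∈ Eset n k, (Lmat n ^ i * umat n r - umat n r))
        ≤ (ν:ℝ) * (2 / (t:ℝ)) := by
      refine le_trans (pnorm_sum_le _ _) ?_
      calc ∑ i ∈ Eset n k, pnorm c n (Lmat n ^ i * umat n r - umat n r)
          ≤ ∑ _i ∈ Eset n k, 2 / (t:ℝ) := Finset.sum_le_sum hterm
        _ = (ν:ℝ) * (2 / (t:ℝ)) := by rw [Finset.sum_const, nsmul_eq_mul]
    calc (ν:ℝ)⁻¹ * pnorm c n (∑ i ∈ Eset n k, (Lmat n ^ i * umat n r - umat n r))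
        ≤ (ν:ℝ)⁻¹ * ((ν:ℝ) * (2 / (t:ℝ))) := mul_le_mul_of_nonneg_left hsum (by positivity)
      _ = 2 / (t:ℝ) := by field_simp
  · rw [show umat n k = 1 from by rw [umat, if_neg hkn], one_mul, sub_self, pnorm_zero]
    positivity

lemma umat_commute (n k r : ℕ) : Commute (umat n k) (umat n r) := by
  unfold umat
  split
  · split
    · have hsum : Commute (∑ i ∈ Eset n k, Lmat n ^ i) (∑ i ∈ Eset n r, Lmat n ^ i) := by
        refine Commute.sum_left _ _ _ fun i _ => ?_
        refine Commute.sum_right _ _ _ fun j _ => ?_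
        exact (Commute.refl (Lmat n)).pow_pow i j
      exact (hsum.smul_right _).smul_left _
    · exact Commute.one_right _
  · exact Commute.one_left _

lemma pnorm_umat_le (hc1 : 1 < c n) (r : ℕ) : pnorm c n (umat n r) ≤ 1 := by
  have hc : c n ≠ 0 := ne_of_gt (lt_trans zero_lt_one hc1)
  rw [umat]
  split
  · rename_i hrn
    rw [pnorm_smul]
    rcases Nat.eq_zero_or_pos (Eset n r).card with h0 | hpos
    · rw [h0]
      simp
    · have hν0 : (0:ℝ) < (Eset n r).card := by exact_mod_cast hpos
      have hnorm : ‖(((Eset n r).card : ℕ) : ℂ)⁻¹‖ = ((Eset n r).card : ℝ)⁻¹ := by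
        rw [norm_inv]; norm_num
      rw [hnorm]
      calc ((Eset n r).card : ℝ)⁻¹ * pnorm c n (∑ i ∈ Eset n r, Lmat n ^ i)
          ≤ ((Eset n r).card : ℝ)⁻¹ * ((Eset n r).card : ℝ) :=
            mul_le_mul_of_nonneg_left (pnorm_sum_Lpow_le hc1 _) (by positivity)
        _ = 1 := inv_mul_cancel₀ (ne_of_gt hν0)
  · exact pnorm_one_le hc

/-- For all integers `r ≥ 1`, `t ≥ 2` and `k ≥ 2tr` one has
`sup_n p_n(u_{n,k} u_{n,r} − u_{n,r}) ≤ 2/t`.  Consequently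
`sup_n p_n(u_{n,k} u_{n,r} − u_{n,r}) → 0` and `sup_n p_n(u_{n,r} u_{n,k} − u_{n,r}) → 0`
as `k → ∞`, so that the tuple `u_r = (u_{n,r})_n` belongs to `A`. -/
theorem stmt3 (c : ℕ → ℝ) (hmono : StrictMono c) (hone : ∀ n, 1 < c n)
    (hunbdd : ∀ M : ℝ, ∃ n, M < c n) (r : ℕ) (hr : 1 ≤ r) :
    (∀ t : ℕ, 2 ≤ t → ∀ k : ℕ, 2 * t * r ≤ k → ∀ n : ℕ,
      pnorm c n (umat n k * umat n r - umat n r) ≤ 2 / (t : ℝ)) ∧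
    memA c (fun n => umat n r) := by
  refine ⟨fun t ht k hk n => key_est hone hr ht hk n, ?_, ?_⟩
  · exact ⟨1, fun n => pnorm_umat_le (hone n) r⟩
  · intro ε hε
    set t : ℕ := max 2 ⌈4/ε⌉₊ with htdef
    have ht2 : 2 ≤ t := le_max_left _ _
    have htpos : 0 < t := by omega
    have ht0 : (0:ℝ) < t := by exact_mod_cast htpos
    have htε : 2 / (t:ℝ) ≤ ε / 2 := by
      have h4 : 4/ε ≤ (t:ℝ) := by
        refine le_trans (Nat.le_ceil _) ?_
        exact_mod_cast le_max_right 2 ⌈4/ε⌉₊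
      have h40 : (0:ℝ) < 4/ε := by positivity
      calc 2 / (t:ℝ) ≤ 2 / (4/ε) := by
            apply div_le_div_of_nonneg_left (by norm_num) h40 h4
        _ = ε / 2 := by
            field_simp
            ring
    refine ⟨2*t*r, fun k hk n => ?_⟩
    have h1 : pnorm c n (umat n k * umat n r - umat n r) ≤ 2 / (t:ℝ) :=
      key_est hone hr ht2 hk n
    have h2 : pnorm c n (umat n r * umat n k - umat n r) ≤ 2 / (t:ℝ) := by
      rw [← (umat_commute n k r).eq]
      exact h1
    calc pnorm c n (umat n r * umat n k - umat n r)
          + pnorm c n (umat n k * umat n r - umat n r)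
        ≤ ε/2 + ε/2 := add_le_add (le_trans h2 htε) (le_trans h1 htε)
      _ = ε := by ring

end
end

section
/- For n ≥ 1 let η = n^{-1/2}(1, 1, …, 1) ∈ ℂ^n, a unit vector. Then ⟨L_n^j η, η⟩ = 1 − j/n for every integer 0 ≤ j ≤ n. Consequently, for every 1 ≤ k ≤ n one has ‖u_{n,k}‖ ≥ 1 − 2/k and ‖u_{n,k}³‖ ≥ 1 − 6/k. -/
noncomputable section

lemma Lpow_entry (n i : ℕ) (a b : Fin n) :
    (Lmat n ^ i) a b = if (a : ℕ) + i = (b : ℕ) then 1 else 0 := by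
  induction i generalizing b with
  | zero => simp [Matrix.one_apply, Fin.ext_iff]
  | succ i ih =>
    rw [pow_succ, Matrix.mul_apply]
    have step : ∀ c : Fin n, (Lmat n ^ i) a c * (Lmat n) c b
        = if (a : ℕ) + i = (c : ℕ) ∧ (c : ℕ) + 1 = (b : ℕ) then 1 else 0 := by
      intro c
      rw [ih]
      show _ * (if (c : ℕ) + 1 = (b : ℕ) then (1:ℂ) else 0) = _
      split_ifs with h1 h2 h3 <;> simp_all
    simp only [step]
    by_cases h : (a : ℕ) + (i + 1) = (b : ℕ)
    · rw [if_pos h]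
      have hb : (a : ℕ) + i < n := by omega
      rw [Finset.sum_eq_single (⟨(a : ℕ) + i, hb⟩ : Fin n)]
      · rw [if_pos]; constructor <;> simp <;> omega
      · intro c _ hc
        rw [if_neg]
        rintro ⟨h1, h2⟩
        exact hc (Fin.ext h1.symm)
      · simp
    · rw [if_neg h]
      apply Finset.sum_eq_zero
      intro c _
      rw [if_neg]
      rintro ⟨h1, h2⟩; omega

lemma inner_Lpow (n : ℕ) (hn : 1 ≤ n) (η : EuclideanSpace ℂ (Fin n))
    (hη : ∀ i, η i = (((Real.sqrt n)⁻¹ : ℝ) : ℂ)) (i : ℕ) :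
    (inner ℂ (Matrix.toEuclideanLin (Lmat n ^ i) η) η : ℂ)
      = (((((n - i : ℕ) : ℝ)) / n : ℝ) : ℂ) := by
  have hn0 : (0:ℝ) < n := by exact_mod_cast hn
  have hs : Real.sqrt n ≠ 0 := by positivity
  have happ : ∀ a : Fin n, (Matrix.toEuclideanLin (Lmat n ^ i) η) a
      = if (a : ℕ) + i < n then (((Real.sqrt n)⁻¹ : ℝ) : ℂ) else 0 := by
    intro a
    show ∑ b, (Lmat n ^ i) a b * η b = _
    simp only [Lpow_entry, hη, ite_mul, one_mul, zero_mul]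
    by_cases h : (a : ℕ) + i < n
    · rw [if_pos h, Finset.sum_eq_single (⟨(a : ℕ) + i, h⟩ : Fin n)]
      · rw [if_pos]; rfl
      · intro c _ hc
        rw [if_neg]
        intro h1
        exact hc (Fin.ext h1.symm)
      · simp
    · rw [if_neg h]
      apply Finset.sum_eq_zero
      intro c _
      rw [if_neg]
      intro h1
      exact h (h1 ▸ c.isLt)
  rw [PiLp.inner_apply]
  simp only [happ, hη, RCLike.inner_apply, apply_ite (starRingEnd ℂ), Complex.conj_ofReal,
    map_zero, ite_mul, zero_mul, mul_ite, mul_zero]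
  rw [Fin.sum_univ_eq_sum_range
    (fun a => if a + i < n then (((Real.sqrt n)⁻¹ : ℝ) : ℂ) * (((Real.sqrt n)⁻¹ : ℝ) : ℂ) else 0)]
  have hflt : (Finset.range n).filter (fun a => a + i < n) = Finset.range (n - i) := by
    ext a; simp only [Finset.mem_filter, Finset.mem_range]; omega
  rw [← Finset.sum_filter, hflt, Finset.sum_const, Finset.card_range, nsmul_eq_mul]
  have hss : ((Real.sqrt n)⁻¹ : ℝ) * (Real.sqrt n)⁻¹ = (n:ℝ)⁻¹ := by
    rw [← mul_inv, Real.mul_self_sqrt hn0.le]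
  push_cast
  congr 1
  rw [← Complex.ofReal_inv, ← Complex.ofReal_mul, hss, Complex.ofReal_inv,
    Complex.ofReal_natCast]

section helpers

lemma eta_norm (n : ℕ) (hn : 1 ≤ n) (η : EuclideanSpace ℂ (Fin n))
    (hη : ∀ i, η i = (((Real.sqrt n)⁻¹ : ℝ) : ℂ)) : ‖η‖ = 1 := by
  have hn0 : (0:ℝ) < n := by exact_mod_cast hn
  rw [EuclideanSpace.norm_eq]
  have h1 : ∀ i : Fin n, ‖η i‖ ^ 2 = (n:ℝ)⁻¹ := by
    intro i
    rw [hη, Complex.norm_real, Real.norm_eq_abs, abs_inv, abs_of_nonneg (Real.sqrt_nonneg _),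
      ← Real.sqrt_inv, Real.sq_sqrt (by positivity)]
  simp only [h1, Finset.sum_const, Finset.card_univ, Fintype.card_fin, nsmul_eq_mul]
  rw [mul_inv_cancel₀ (ne_of_gt hn0), Real.sqrt_one]

lemma opNorm_lb {n : ℕ} (x : Matrix (Fin n) (Fin n) ℂ) (η : EuclideanSpace ℂ (Fin n))
    (hη1 : ‖η‖ = 1) (r : ℝ)
    (h : (inner ℂ (Matrix.toEuclideanLin x η) η : ℂ) = (r : ℂ)) : r ≤ opNorm x := by
  have hcs := norm_inner_le_norm (𝕜 := ℂ) (Matrix.toEuclideanLin x η) η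
  have hop := (LinearMap.toContinuousLinearMap (Matrix.toEuclideanLin x)).le_opNorm η
  rw [LinearMap.coe_toContinuousLinearMap'] at hop
  rw [h, Complex.norm_real, hη1, mul_one] at hcs
  have : r ≤ ‖r‖ := le_abs_self r
  rw [hη1, mul_one] at hop
  calc r ≤ ‖r‖ := le_abs_self r
    _ ≤ ‖Matrix.toEuclideanLin x η‖ := hcs
    _ ≤ opNorm x := hop

lemma inner_sum_eq {n : ℕ} (η : EuclideanSpace ℂ (Fin n)) {α : Type}
    (s : Finset α) (f : α → Matrix (Fin n) (Fin n) ℂ) (g : α → ℝ)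
    (h : ∀ a ∈ s, (inner ℂ (Matrix.toEuclideanLin (f a) η) η : ℂ) = ((g a : ℝ) : ℂ)) :
    (inner ℂ (Matrix.toEuclideanLin (∑ a ∈ s, f a) η) η : ℂ)
      = ((∑ a ∈ s, g a : ℝ) : ℂ) := by
  rw [map_sum, LinearMap.sum_apply, sum_inner, Complex.ofReal_sum]
  exact Finset.sum_congr rfl h

end helpers

/-- For `n ≥ 1` let `η = n^{-1/2}(1, …, 1) ∈ ℂ^n`.  Then
`⟨L_n^j η, η⟩ = 1 − j/n` for every `0 ≤ j ≤ n`.  Consequently, for every `1 ≤ k ≤ n` one has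
`‖u_{n,k}‖ ≥ 1 − 2/k` and `‖u_{n,k}³‖ ≥ 1 − 6/k`. -/
theorem stmt5 (n : ℕ) (hn : 1 ≤ n)
    (η : EuclideanSpace ℂ (Fin n)) (hη : ∀ i, η i = (((Real.sqrt n)⁻¹ : ℝ) : ℂ)) :
    (∀ j : ℕ, j ≤ n →
      (inner ℂ (Matrix.toEuclideanLin (Lmat n ^ j) η) η : ℂ) = ((1 - (j : ℝ) / n : ℝ) : ℂ)) ∧
    (∀ k : ℕ, 1 ≤ k → k ≤ n →
      1 - 2 / (k : ℝ) ≤ opNorm (umat n k) ∧ 1 - 6 / (k : ℝ) ≤ opNorm (umat n k ^ 3)) := by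
  have hn0 : (0:ℝ) < n := by exact_mod_cast hn
  constructor
  · intro j hj
    rw [inner_Lpow n hn η hη j]
    congr 1
    rw [Nat.cast_sub hj]
    field_simp
  intro k hk1 hkn
  have hk0 : (0:ℝ) < k := by exact_mod_cast hk1
  -- generic per-term bound
  have hgen : ∀ (c : ℝ) (m : ℕ), (m : ℝ) ≤ c * n / k → 1 - c / k ≤ ((n - m : ℕ) : ℝ) / n := by
    intro c m hm
    have hmk : (m : ℝ) * k ≤ c * n := (le_div_iff₀ hk0).mp hm
    have h1 : (n : ℝ) - m ≤ ((n - m : ℕ) : ℝ) := by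
      rcases le_or_gt m n with h | h
      · rw [Nat.cast_sub h]
      · have h2 : n - m = 0 := by omega
        have h3 : (n : ℝ) < m := by exact_mod_cast h
        rw [h2]; push_cast; linarith
    have h4 : ((n:ℝ) - m) / n ≤ ((n - m : ℕ) : ℝ) / n := by gcongr
    have h5 : 1 - c / k ≤ ((n:ℝ) - m) / n := by
      rw [sub_div, div_self (ne_of_gt hn0), sub_le_sub_iff_left, div_le_div_iff₀ hn0 hk0]
      linarith
    linarith
  -- membership facts
  have hmem : ∀ i ∈ Eset n k, (i : ℝ) ≤ 2 * n / k := by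
    intro i hi
    simp only [Eset, Finset.mem_filter] at hi
    exact hi.2.2
  -- E is nonempty
  have hE : (Eset n k).Nonempty := by
    refine ⟨⌈(n : ℝ) / k⌉₊, ?_⟩
    have hx1 : (1:ℝ) ≤ (n : ℝ) / k := by
      rw [le_div_iff₀ hk0]; rw [one_mul]; exact_mod_cast hkn
    have hc1 : ((n : ℝ) / k) ≤ ⌈(n : ℝ) / k⌉₊ := Nat.le_ceil _
    have hc2 : (⌈(n : ℝ) / k⌉₊ : ℝ) < (n : ℝ) / k + 1 :=
      Nat.ceil_lt_add_one (by positivity)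
    have hc3 : (⌈(n : ℝ) / k⌉₊ : ℝ) ≤ 2 * n / k := by
      rw [show (2:ℝ) * n / k = (n:ℝ)/k + (n:ℝ)/k by ring]
      linarith
    have hc4 : (⌈(n : ℝ) / k⌉₊ : ℝ) ≤ 2 * n := by
      calc (⌈(n : ℝ) / k⌉₊ : ℝ) ≤ 2 * n / k := hc3
        _ ≤ 2 * n / 1 := by gcongr; exact_mod_cast hk1
        _ = 2 * n := by ring
    simp only [Eset, Finset.mem_filter, Finset.mem_range]
    refine ⟨?_, hc1, hc3⟩
    have : (⌈(n : ℝ) / k⌉₊ : ℝ) ≤ ((2 * n : ℕ) : ℝ) := by push_cast; linarith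
    have := Nat.cast_le (α := ℝ) |>.mp this
    omega
  set E := Eset n k with hEdef
  set μ := E.card with hμdef
  have hμ0 : 0 < μ := Finset.card_pos.mpr hE
  have hμ0' : (0:ℝ) < μ := by exact_mod_cast hμ0
  have hη1 : ‖η‖ = 1 := eta_norm n hn η hη
  have hu : umat n k = ((μ : ℂ))⁻¹ • ∑ i ∈ E, Lmat n ^ i := by
    rw [umat, if_pos hkn]
  -- inner products with powers, as a function
  have hLp : ∀ i : ℕ, (inner ℂ (Matrix.toEuclideanLin (Lmat n ^ i) η) η : ℂ)
      = ((((n - i : ℕ) : ℝ)) / n : ℝ) := inner_Lpow n hn η hη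
  -- inner product with u
  have hsmul : ∀ (x : Matrix (Fin n) (Fin n) ℂ) (r : ℝ),
      (inner ℂ (Matrix.toEuclideanLin x η) η : ℂ) = (r : ℂ) →
      ∀ c : ℝ, 0 ≤ c → (inner ℂ (Matrix.toEuclideanLin (((c:ℝ):ℂ) • x) η) η : ℂ) = ((c * r : ℝ) : ℂ) := by
    intro x r hx c hc
    rw [map_smul, LinearMap.smul_apply, inner_smul_left, hx, Complex.conj_ofReal]
    push_cast
    ring
  constructor
  · -- ‖u‖ ≥ 1 - 2/k
    have hinner : (inner ℂ (Matrix.toEuclideanLin (umat n k) η) η : ℂ)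
        = (((μ:ℝ)⁻¹ * ∑ i ∈ E, ((n - i : ℕ) : ℝ) / n : ℝ) : ℂ) := by
      rw [hu]
      have := hsmul (∑ i ∈ E, Lmat n ^ i) (∑ i ∈ E, ((n - i : ℕ) : ℝ) / n)
        (inner_sum_eq η E (fun i => Lmat n ^ i) (fun i => ((n - i : ℕ) : ℝ) / n)
          (fun i _ => hLp i)) (μ:ℝ)⁻¹ (by positivity)
      simpa using this
    have hge : 1 - 2 / (k:ℝ) ≤ (μ:ℝ)⁻¹ * ∑ i ∈ E, ((n - i : ℕ) : ℝ) / n := by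
      have hsum : (μ : ℝ) * (1 - 2 / k) ≤ ∑ i ∈ E, ((n - i : ℕ) : ℝ) / n := by
        calc (μ : ℝ) * (1 - 2 / k) = ∑ _i ∈ E, (1 - 2 / (k:ℝ)) := by
              rw [Finset.sum_const, nsmul_eq_mul]
          _ ≤ ∑ i ∈ E, ((n - i : ℕ) : ℝ) / n := by
              apply Finset.sum_le_sum
              intro i hi
              exact hgen 2 i (by rw [show (2:ℝ) * n / k = 2 * ((n:ℝ)) / k by ring]; exact hmem i hi)
      calc 1 - 2 / (k:ℝ) = (μ:ℝ)⁻¹ * ((μ:ℝ) * (1 - 2 / k)) := by field_simp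
        _ ≤ (μ:ℝ)⁻¹ * ∑ i ∈ E, ((n - i : ℕ) : ℝ) / n := by gcongr
    exact le_trans hge (opNorm_lb _ η hη1 _ hinner)
  · -- ‖u³‖ ≥ 1 - 6/k
    have hS3 : (∑ i ∈ E, Lmat n ^ i) ^ 3
        = ∑ i ∈ E, ∑ j ∈ E, ∑ l ∈ E, Lmat n ^ (i + j + l) := by
      rw [pow_succ, pow_two, Finset.sum_mul_sum, Finset.sum_mul]
      apply Finset.sum_congr rfl; intro i _
      rw [Finset.sum_mul]
      apply Finset.sum_congr rfl; intro j _
      rw [Finset.mul_sum]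
      apply Finset.sum_congr rfl; intro l _
      rw [← pow_add, ← pow_add]
    have hu3 : umat n k ^ 3 = ((((μ:ℝ)⁻¹ ^ 3 : ℝ)) : ℂ) •
        ∑ i ∈ E, ∑ j ∈ E, ∑ l ∈ E, Lmat n ^ (i + j + l) := by
      rw [hu, smul_pow, hS3]
      congr 1
      push_cast
      ring
    have hinner3 : (inner ℂ (Matrix.toEuclideanLin (umat n k ^ 3) η) η : ℂ)
        = ((((μ:ℝ)⁻¹ ^ 3) * ∑ i ∈ E, ∑ j ∈ E, ∑ l ∈ E, ((n - (i + j + l) : ℕ) : ℝ) / n : ℝ) : ℂ) := by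
      rw [hu3]
      apply hsmul _ _ ?_ _ (by positivity)
      apply inner_sum_eq
      intro i _
      apply inner_sum_eq
      intro j _
      apply inner_sum_eq
      intro l _
      exact hLp (i + j + l)
    have hge3 : 1 - 6 / (k:ℝ)
        ≤ ((μ:ℝ)⁻¹ ^ 3) * ∑ i ∈ E, ∑ j ∈ E, ∑ l ∈ E, ((n - (i + j + l) : ℕ) : ℝ) / n := by
      have hsum : (μ : ℝ) ^ 3 * (1 - 6 / k)
          ≤ ∑ i ∈ E, ∑ j ∈ E, ∑ l ∈ E, ((n - (i + j + l) : ℕ) : ℝ) / n := by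
        have hterm : ∀ i ∈ E, ∀ j ∈ E, ∀ l ∈ E,
            1 - 6 / (k:ℝ) ≤ ((n - (i + j + l) : ℕ) : ℝ) / n := by
          intro i hi j hj l hl
          apply hgen 6
          have h1 := hmem i hi; have h2 := hmem j hj; have h3 := hmem l hl
          push_cast
          rw [show (6:ℝ) * n / k = 2*n/k + 2*n/k + 2*n/k by ring]
          linarith
        calc (μ : ℝ) ^ 3 * (1 - 6 / k) = ∑ _i ∈ E, ∑ _j ∈ E, ∑ _l ∈ E, (1 - 6 / (k:ℝ)) := by
              simp only [Finset.sum_const, nsmul_eq_mul]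
              push_cast
              ring
          _ ≤ _ := by
              apply Finset.sum_le_sum; intro i hi
              apply Finset.sum_le_sum; intro j hj
              apply Finset.sum_le_sum; intro l hl
              exact hterm i hi j hj l hl
      calc 1 - 6 / (k:ℝ) = ((μ:ℝ)⁻¹ ^ 3) * ((μ:ℝ) ^ 3 * (1 - 6 / k)) := by field_simp
        _ ≤ _ := by gcongr
    exact le_trans hge3 (opNorm_lb _ η hη1 _ hinner3)

end
end

section
/- Fix an integer r ≥ 12 (so 1 − 6/r ≥ 1/2). For every bounded sequence α = (α_n)_{n≥1} of complex numbers: (i) the sequence (α_n u_{n,r}³)_{n≥1} belongs to A; and (ii) (1/2) sup_n |α_n| ≤ sup_n p_n(α_n u_{n,r}³) ≤ sup_n |α_n|. In particular the map α ↦ (α_n u_{n,r}³) is a bicontinuous linear injection of ℓ^∞ into A. -/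
noncomputable section

open scoped Matrix.Norms.L2Operator

namespace Stmt6Aux

lemma opNorm_eq {n : ℕ} (x : Matrix (Fin n) (Fin n) ℂ) : opNorm x = ‖x‖ := rfl

/-- conjugation by the diagonal matrix -/
def cj (c : ℕ → ℝ) (n : ℕ) (x : Matrix (Fin n) (Fin n) ℂ) : Matrix (Fin n) (Fin n) ℂ :=
  dMat c n * x * dMatInv c n

variable {c : ℕ → ℝ} {n : ℕ}

lemma pnorm_eq (x : Matrix (Fin n) (Fin n) ℂ) : pnorm c n x = max ‖x‖ ‖cj c n x‖ := rfl
lemma d_mul_dInv (hc : c n ≠ 0) : dMat c n * dMatInv c n = 1 := by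
  rw [dMat, dMatInv, Matrix.diagonal_mul_diagonal]
  have h : ∀ k : Fin n, ((c n ^ ((k:ℕ)+1) : ℝ) : ℂ) * (((c n ^ ((k:ℕ)+1))⁻¹ : ℝ) : ℂ) = 1 := by
    intro k
    rw [← Complex.ofReal_mul, mul_inv_cancel₀ (pow_ne_zero _ hc), Complex.ofReal_one]
  simp only [h, Matrix.diagonal_one]

lemma dInv_mul_d (hc : c n ≠ 0) : dMatInv c n * dMat c n = 1 := by
  rw [dMatInv, dMat, Matrix.diagonal_mul_diagonal]
  have h : ∀ k : Fin n, (((c n ^ ((k:ℕ)+1))⁻¹ : ℝ) : ℂ) * ((c n ^ ((k:ℕ)+1) : ℝ) : ℂ) = 1 := by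
    intro k
    rw [← Complex.ofReal_mul, inv_mul_cancel₀ (pow_ne_zero _ hc), Complex.ofReal_one]
  simp only [h, Matrix.diagonal_one]

lemma cj_one (hc : c n ≠ 0) : cj c n 1 = 1 := by
  rw [cj, mul_one, d_mul_dInv hc]

lemma cj_mul (hc : c n ≠ 0) (x y : Matrix (Fin n) (Fin n) ℂ) :
    cj c n (x * y) = cj c n x * cj c n y := by
  simp only [cj]
  have h := dInv_mul_d (c := c) (n := n) hc
  calc dMat c n * (x * y) * dMatInv c n
      = dMat c n * x * (dMatInv c n * dMat c n) * (y * dMatInv c n) := by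
        rw [h, mul_one]; noncomm_ring
    _ = dMat c n * x * dMatInv c n * (dMat c n * y * dMatInv c n) := by noncomm_ring

lemma cj_smul (a : ℂ) (x : Matrix (Fin n) (Fin n) ℂ) : cj c n (a • x) = a • cj c n x := by
  simp only [cj, Matrix.mul_smul, Matrix.smul_mul]

lemma cj_sub (x y : Matrix (Fin n) (Fin n) ℂ) : cj c n (x - y) = cj c n x - cj c n y := by
  simp only [cj, Matrix.mul_sub, Matrix.sub_mul]

lemma cj_sum {ι : Type*} (s : Finset ι) (f : ι → Matrix (Fin n) (Fin n) ℂ) :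
    cj c n (∑ i ∈ s, f i) = ∑ i ∈ s, cj c n (f i) := by
  simp only [cj, Finset.mul_sum, Finset.sum_mul]

lemma pnorm_nonneg (x : Matrix (Fin n) (Fin n) ℂ) : 0 ≤ pnorm c n x :=
  le_trans (norm_nonneg x) (le_max_left _ _)

lemma norm_le_pnorm (x : Matrix (Fin n) (Fin n) ℂ) : ‖x‖ ≤ pnorm c n x := le_max_left _ _

lemma pnorm_zero : pnorm c n 0 = 0 := by
  simp [pnorm_eq, cj, Matrix.mul_zero, Matrix.zero_mul]

lemma pnorm_smul (a : ℂ) (x : Matrix (Fin n) (Fin n) ℂ) :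
    pnorm c n (a • x) = ‖a‖ * pnorm c n x := by
  rw [pnorm_eq, pnorm_eq, cj_smul, norm_smul, norm_smul]
  rcases le_total ‖x‖ ‖cj c n x‖ with h | h
  · rw [max_eq_right h, max_eq_right (by nlinarith [norm_nonneg a])]
  · rw [max_eq_left h, max_eq_left (by nlinarith [norm_nonneg a])]

lemma pnorm_mul_le (hc : c n ≠ 0) (x y : Matrix (Fin n) (Fin n) ℂ) :
    pnorm c n (x * y) ≤ pnorm c n x * pnorm c n y := by
  rw [pnorm_eq, pnorm_eq, pnorm_eq, cj_mul hc]
  apply max_le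
  · exact le_trans (norm_mul_le x y)
      (mul_le_mul (le_max_left _ _) (le_max_left _ _) (norm_nonneg _) (pnorm_nonneg x))
  · exact le_trans (norm_mul_le _ _)
      (mul_le_mul (le_max_right _ _) (le_max_right _ _) (norm_nonneg _) (pnorm_nonneg x))

lemma pnorm_sub_le (x y : Matrix (Fin n) (Fin n) ℂ) :
    pnorm c n (x - y) ≤ pnorm c n x + pnorm c n y := by
  rw [pnorm_eq, pnorm_eq, pnorm_eq, cj_sub]
  apply max_le
  · exact le_trans (norm_sub_le x y) (add_le_add (le_max_left _ _) (le_max_left _ _))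
  · exact le_trans (norm_sub_le _ _) (add_le_add (le_max_right _ _) (le_max_right _ _))

lemma pnorm_sum_le {ι : Type*} (s : Finset ι) (f : ι → Matrix (Fin n) (Fin n) ℂ) :
    pnorm c n (∑ i ∈ s, f i) ≤ ∑ i ∈ s, pnorm c n (f i) := by
  rw [pnorm_eq, cj_sum]
  apply max_le
  · exact le_trans (norm_sum_le s f) (Finset.sum_le_sum fun i _ => le_max_left _ _)
  · exact le_trans (norm_sum_le s _) (Finset.sum_le_sum fun i _ => le_max_right _ _)

lemma pnorm_one_le (hc : c n ≠ 0) : pnorm c n 1 ≤ 1 := by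
  rw [pnorm_eq, cj_one hc]
  apply max_le <;>
  · rw [Matrix.cstar_norm_def, map_one]; exact ContinuousLinearMap.norm_id_le
lemma Lmat_apply (i j : Fin n) : Lmat n i j = if (i : ℕ) + 1 = (j : ℕ) then 1 else 0 := rfl

lemma Lpow_apply (m : ℕ) (i j : Fin n) :
    (Lmat n ^ m) i j = if (i : ℕ) + m = (j : ℕ) then 1 else 0 := by
  induction m generalizing j with
  | zero => simp [Matrix.one_apply, Fin.ext_iff, eq_comm]
  | succ m ih =>
    rw [pow_succ, Matrix.mul_apply]
    simp only [ih, Lmat_apply, ite_mul, one_mul, zero_mul]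
    by_cases h : (i:ℕ) + (m+1) = (j:ℕ)
    · have hm : (i:ℕ) + m < n := by omega
      rw [Finset.sum_eq_single (⟨(i:ℕ)+m, hm⟩ : Fin n)]
      · rw [if_pos rfl, if_pos (by simp; omega), if_pos h]
      · intro k _ hk
        rw [if_neg (fun hh => hk (Fin.ext hh.symm))]
      · intro hk; exact absurd (Finset.mem_univ _) hk
    · rw [if_neg h]
      apply Finset.sum_eq_zero
      intro k _
      split_ifs with h1 h2
      · omega
      · rfl
      · rfl

lemma LHL : (Lmat n).conjTranspose * Lmat n
    = Matrix.diagonal (fun i : Fin n => if 1 ≤ (i:ℕ) then (1:ℂ) else 0) := by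
  ext i j
  rw [Matrix.mul_apply, Matrix.diagonal_apply]
  simp only [Matrix.conjTranspose_apply, Lmat_apply, apply_ite (star : ℂ → ℂ), star_one,
    star_zero, ite_mul, one_mul, zero_mul]
  by_cases h : i = j
  · subst h
    by_cases h1 : 1 ≤ (i:ℕ)
    · have hm : (i:ℕ) - 1 < n := by omega
      rw [Finset.sum_eq_single (⟨(i:ℕ)-1, hm⟩ : Fin n)]
      · rw [if_pos (by simp; omega), if_pos (by simp; omega), if_pos rfl, if_pos h1]
      · intro k _ hk
        rw [if_neg (fun hh => hk (Fin.ext (by simp; omega)))]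
      · intro hk; exact absurd (Finset.mem_univ _) hk
    · rw [if_pos rfl, if_neg h1]
      apply Finset.sum_eq_zero
      intro k _
      rw [if_neg (by omega)]
  · rw [if_neg h]
    apply Finset.sum_eq_zero
    intro k _
    split_ifs with h1 h2
    · exact absurd (Fin.val_injective (by omega)) h
    · rfl
    · rfl

lemma norm_Lmat_le : ‖Lmat n‖ ≤ 1 := by
  set p := Matrix.diagonal (fun i : Fin n => if 1 ≤ (i:ℕ) then (1:ℂ) else 0) with hp
  have hfun : (fun i : Fin n => (if 1 ≤ (i:ℕ) then (1:ℂ) else 0) * (if 1 ≤ (i:ℕ) then (1:ℂ) else 0))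
      = fun i : Fin n => if 1 ≤ (i:ℕ) then (1:ℂ) else 0 := by
    funext i; split_ifs <;> simp
  have hpp : p * p = p := by
    rw [hp, Matrix.diagonal_mul_diagonal, hfun]
  have hsfun : (star fun i : Fin n => if 1 ≤ (i:ℕ) then (1:ℂ) else 0)
      = fun i : Fin n => if 1 ≤ (i:ℕ) then (1:ℂ) else 0 := by
    funext i
    simp only [Pi.star_apply]
    split_ifs <;> simp
  have hps : star p = p := by
    rw [Matrix.star_eq_conjTranspose, hp, Matrix.diagonal_conjTranspose, hsfun]
  have h1 : ‖p‖ * ‖p‖ = ‖p‖ := by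
    conv_rhs => rw [← hpp]
    conv_lhs => rw [← CStarRing.norm_star_mul_self (x := p), hps]
  have hple : ‖p‖ ≤ 1 := by nlinarith [norm_nonneg p]
  have h2 : ‖(Lmat n).conjTranspose * Lmat n‖ = ‖Lmat n‖ * ‖Lmat n‖ := by
    rw [← Matrix.star_eq_conjTranspose]
    exact CStarRing.norm_star_mul_self
  rw [LHL, ← hp] at h2
  nlinarith [norm_nonneg (Lmat n)]

lemma norm_Lpow_le (m : ℕ) : ‖Lmat n ^ m‖ ≤ 1 := by
  induction m with
  | zero =>
    rw [pow_zero, Matrix.cstar_norm_def, map_one]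
    exact ContinuousLinearMap.norm_id_le
  | succ m ih =>
    rw [pow_succ]
    calc ‖Lmat n ^ m * Lmat n‖ ≤ ‖Lmat n ^ m‖ * ‖Lmat n‖ := norm_mul_le _ _
    _ ≤ 1 * 1 := mul_le_mul ih norm_Lmat_le (norm_nonneg _) zero_le_one
    _ = 1 := mul_one 1

lemma cj_Lpow (hc1 : 1 < c n) (m : ℕ) :
    cj c n (Lmat n ^ m) = ((((c n) ^ m)⁻¹ : ℝ) : ℂ) • (Lmat n ^ m) := by
  have hc0 : (c n) ≠ 0 := by positivity
  rw [cj, dMat, dMatInv]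
  ext i j
  rw [Matrix.mul_diagonal, Matrix.diagonal_mul, Lpow_apply, Matrix.smul_apply, Lpow_apply,
    smul_eq_mul]
  split_ifs with h
  · rw [mul_one, mul_one, ← h]
    push_cast
    have hcc : (c n : ℂ) ≠ 0 := by exact_mod_cast hc0
    field_simp
    ring
  · simp

lemma pnorm_Lpow_le (hc1 : 1 < c n) (m : ℕ) : pnorm c n (Lmat n ^ m) ≤ 1 := by
  rw [pnorm_eq, cj_Lpow hc1 m]
  apply max_le (norm_Lpow_le m)
  rw [norm_smul]
  have h1 : ‖((((c n) ^ m)⁻¹ : ℝ) : ℂ)‖ ≤ 1 := by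
    rw [Complex.norm_real, Real.norm_eq_abs, abs_of_nonneg (by positivity)]
    exact inv_le_one_of_one_le₀ (one_le_pow₀ hc1.le)
  calc ‖((((c n) ^ m)⁻¹ : ℝ) : ℂ)‖ * ‖Lmat n ^ m‖ ≤ 1 * 1 :=
    mul_le_mul h1 (norm_Lpow_le m) (norm_nonneg _) zero_le_one
  _ = 1 := mul_one 1

lemma Eset_eq {k : ℕ} (hk : 1 ≤ k) :
    Eset n k = Finset.Icc ⌈(n:ℝ)/k⌉₊ ⌊2*(n:ℝ)/k⌋₊ := by
  have hk0 : (0:ℝ) < k := by positivity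
  ext i
  simp only [Eset, Finset.mem_filter, Finset.mem_range, Finset.mem_Icc]
  constructor
  · rintro ⟨-, h1, h2⟩
    exact ⟨Nat.ceil_le.mpr h1, Nat.le_floor h2⟩
  · rintro ⟨h1, h2⟩
    have hx : (0:ℝ) ≤ 2*(n:ℝ)/k := by positivity
    have h2' : (i:ℝ) ≤ 2*(n:ℝ)/k := by
      calc (i:ℝ) ≤ (⌊2*(n:ℝ)/k⌋₊:ℝ) := by exact_mod_cast h2
      _ ≤ 2*(n:ℝ)/k := Nat.floor_le hx
    refine ⟨?_, Nat.ceil_le.mp h1, h2'⟩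
    have hd : 2*(n:ℝ)/k ≤ 2*(n:ℝ) := div_le_self (by positivity) (by exact_mod_cast hk)
    have : (i:ℝ) ≤ ((2*n : ℕ):ℝ) := by push_cast; linarith
    have := Nat.cast_le.mp this
    omega

lemma ceil_le_floor {k : ℕ} (hk : 1 ≤ k) (hkn : k ≤ n) :
    ⌈(n:ℝ)/k⌉₊ ≤ ⌊2*(n:ℝ)/k⌋₊ := by
  have hk0 : (0:ℝ) < k := by positivity
  have h1 : (1:ℝ) ≤ (n:ℝ)/k := (one_le_div hk0).mpr (by exact_mod_cast hkn)
  apply Nat.le_floor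
  have h2 : (⌈(n:ℝ)/k⌉₊:ℝ) < (n:ℝ)/k + 1 := Nat.ceil_lt_add_one (by linarith)
  have h3 : 2*(n:ℝ)/k = (n:ℝ)/k + (n:ℝ)/k := by ring
  linarith

lemma pnorm_umat_le (hc1 : 1 < c n) (k : ℕ) : pnorm c n (umat n k) ≤ 1 := by
  have hc0 : c n ≠ 0 := by positivity
  rw [umat]
  split_ifs with h
  · calc pnorm c n (((Eset n k).card : ℂ)⁻¹ • ∑ i ∈ Eset n k, Lmat n ^ i)
        = ‖((Eset n k).card : ℂ)⁻¹‖ * pnorm c n (∑ i ∈ Eset n k, Lmat n ^ i) := pnorm_smul _ _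
      _ ≤ (((Eset n k).card : ℝ))⁻¹ * (((Eset n k).card : ℝ)) := by
          apply mul_le_mul _ _ (pnorm_nonneg _) (by positivity)
          · rw [norm_inv, Complex.norm_natCast]
          · calc pnorm c n (∑ i ∈ Eset n k, Lmat n ^ i)
                ≤ ∑ i ∈ Eset n k, pnorm c n (Lmat n ^ i) := pnorm_sum_le _ _
              _ ≤ ∑ _i ∈ Eset n k, (1:ℝ) :=
                  Finset.sum_le_sum fun i _ => pnorm_Lpow_le hc1 i
              _ = ((Eset n k).card : ℝ) := by simp
      _ ≤ 1 := by
          rcases Nat.eq_zero_or_pos (Eset n k).card with h0 | h0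
          · simp [h0]
          · rw [inv_mul_cancel₀ (by positivity)]
  · exact pnorm_one_le hc0

lemma umat_comm (k l : ℕ) : umat n k * umat n l = umat n l * umat n k := by
  have h : ∀ a b : ℕ, Commute (umat n a) (umat n b) := by
    intro a b
    unfold umat
    split_ifs with h1 h2 h2
    · apply Commute.smul_left
      apply Commute.smul_right
      apply Commute.sum_left
      intro i _
      apply Commute.sum_right
      intro j _
      exact Commute.pow_pow (Commute.refl (Lmat n)) i j
    · exact Commute.one_right _
    · exact Commute.one_left _
    · exact Commute.one_left _
  exact (h k l).eq

lemma pnorm_powsum_le (hc1 : 1 < c n) (W : Finset ℕ) :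
    pnorm c n (∑ j ∈ W, Lmat n ^ j) ≤ (W.card : ℝ) := by
  calc pnorm c n (∑ i ∈ W, Lmat n ^ i)
      ≤ ∑ i ∈ W, pnorm c n (Lmat n ^ i) := pnorm_sum_le _ _
    _ ≤ ∑ _i ∈ W, (1:ℝ) := Finset.sum_le_sum fun i _ => pnorm_Lpow_le hc1 i
    _ = (W.card : ℝ) := by simp

lemma pnorm_shift_sub_le (hc1 : 1 < c n) (a b y : ℕ) :
    pnorm c n ((∑ i ∈ Finset.Icc a b, Lmat n ^ (i + y)) - ∑ i ∈ Finset.Icc a b, Lmat n ^ i)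
      ≤ 2 * y := by
  have h1 : (∑ i ∈ Finset.Icc a b, Lmat n ^ (i + y))
      = ∑ j ∈ Finset.Icc (a+y) (b+y), Lmat n ^ j := by
    rw [← Finset.map_add_right_Icc a b y, Finset.sum_map]
    rfl
  rw [h1, ← Finset.sum_sdiff_sub_sum_sdiff]
  have hTS : (Finset.Icc (a+y) (b+y)) \ (Finset.Icc a b) ⊆ Finset.Ioc b (b+y) := by
    intro x hx
    simp only [Finset.mem_sdiff, Finset.mem_Icc, Finset.mem_Ioc, not_and, not_le] at hx ⊢
    omega
  have hST : (Finset.Icc a b) \ (Finset.Icc (a+y) (b+y)) ⊆ Finset.Ico a (a+y) := by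
    intro x hx
    simp only [Finset.mem_sdiff, Finset.mem_Icc, Finset.mem_Ico, not_and, not_le] at hx ⊢
    omega
  have c1 : (((Finset.Icc (a+y) (b+y)) \ (Finset.Icc a b)).card : ℝ) ≤ (y:ℝ) := by
    have := Finset.card_le_card hTS
    rw [Nat.card_Ioc] at this
    exact_mod_cast le_trans this (by omega)
  have c2 : (((Finset.Icc a b) \ (Finset.Icc (a+y) (b+y))).card : ℝ) ≤ (y:ℝ) := by
    have := Finset.card_le_card hST
    rw [Nat.card_Ico] at this
    exact_mod_cast le_trans this (by omega)
  calc pnorm c n ((∑ j ∈ (Finset.Icc (a+y) (b+y)) \ (Finset.Icc a b), Lmat n ^ j)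
          - ∑ j ∈ (Finset.Icc a b) \ (Finset.Icc (a+y) (b+y)), Lmat n ^ j)
      ≤ pnorm c n (∑ j ∈ (Finset.Icc (a+y) (b+y)) \ (Finset.Icc a b), Lmat n ^ j)
        + pnorm c n (∑ j ∈ (Finset.Icc a b) \ (Finset.Icc (a+y) (b+y)), Lmat n ^ j) :=
        pnorm_sub_le _ _
    _ ≤ (((Finset.Icc (a+y) (b+y)) \ (Finset.Icc a b)).card : ℝ)
        + (((Finset.Icc a b) \ (Finset.Icc (a+y) (b+y))).card : ℝ) :=
        add_le_add (pnorm_powsum_le hc1 _) (pnorm_powsum_le hc1 _)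
    _ ≤ (y:ℝ) + (y:ℝ) := add_le_add c1 c2
    _ = 2*y := by ring

lemma key (hc1 : 1 < c n) {r k : ℕ} (hr : 12 ≤ r) (hrn : r ≤ n) (hkn : k ≤ n) (hk : 1 ≤ k) :
    pnorm c n (umat n r * umat n k - umat n r) ≤ 8 * r / k := by
  have hr1 : 1 ≤ r := by omega
  have hn1 : 1 ≤ n := le_trans hr1 hrn
  have hrR : (0:ℝ) < r := by positivity
  have hkR : (0:ℝ) < k := by positivity
  have hnR : (0:ℝ) < n := by positivity
  set a := ⌈(n:ℝ)/r⌉₊ with ha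
  set b := ⌊2*(n:ℝ)/r⌋₊ with hb
  set a' := ⌈(n:ℝ)/k⌉₊ with ha'
  set b' := ⌊2*(n:ℝ)/k⌋₊ with hb'
  have hEr : Eset n r = Finset.Icc a b := Eset_eq hr1
  have hEk : Eset n k = Finset.Icc a' b' := Eset_eq hk
  have hab : a ≤ b := ceil_le_floor hr1 hrn
  have hab' : a' ≤ b' := ceil_le_floor hk hkn
  set μ := (Eset n r).card with hμ
  set ν := (Eset n k).card with hν
  have hνpos : 0 < ν := by
    rw [hν, hEk]
    rw [Nat.card_Icc]
    omega
  have hμcard : μ = b + 1 - a := by rw [hμ, hEr, Nat.card_Icc]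
  have hμpos : 0 < μ := by omega
  have hμR : (0:ℝ) < μ := by positivity
  have hνR : (0:ℝ) < ν := by positivity
  -- rewrite the difference
  have hur : umat n r = (μ:ℂ)⁻¹ • ∑ i ∈ Eset n r, Lmat n ^ i := by rw [umat, if_pos hrn]
  have huk : umat n k = (ν:ℂ)⁻¹ • ∑ i ∈ Eset n k, Lmat n ^ i := by rw [umat, if_pos hkn]
  have hprod : umat n r * umat n k
      = (μ:ℂ)⁻¹ • ((ν:ℂ)⁻¹ • ∑ y ∈ Eset n k, ∑ i ∈ Eset n r, Lmat n ^ (i + y)) := by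
    rw [hur, huk, Matrix.smul_mul, Matrix.mul_smul, Finset.sum_mul_sum]
    congr 2
    rw [Finset.sum_comm]
    congr 1
    funext y
    congr 1
    funext i
    rw [pow_add]
  have hur2 : umat n r
      = (μ:ℂ)⁻¹ • ((ν:ℂ)⁻¹ • ∑ y ∈ Eset n k, ∑ i ∈ Eset n r, Lmat n ^ i) := by
    rw [hur]
    congr 1
    rw [Finset.sum_const, ← Nat.cast_smul_eq_nsmul ℂ, smul_smul,
      inv_mul_cancel₀ (by exact_mod_cast hνpos.ne'), one_smul]
  have hdiff : umat n r * umat n k - umat n r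
      = (μ:ℂ)⁻¹ • ((ν:ℂ)⁻¹ • ∑ y ∈ Eset n k,
          ((∑ i ∈ Eset n r, Lmat n ^ (i + y)) - ∑ i ∈ Eset n r, Lmat n ^ i)) := by
    rw [hprod, hur2, ← smul_sub, ← smul_sub, ← Finset.sum_sub_distrib]
  rw [hdiff]
  -- bound
  have hb'le : (b' : ℝ) ≤ 2*(n:ℝ)/k := Nat.floor_le (by positivity)
  have step : pnorm c n ((μ:ℂ)⁻¹ • ((ν:ℂ)⁻¹ • ∑ y ∈ Eset n k,
          ((∑ i ∈ Eset n r, Lmat n ^ (i + y)) - ∑ i ∈ Eset n r, Lmat n ^ i)))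
      ≤ (μ:ℝ)⁻¹ * ((ν:ℝ)⁻¹ * (ν * (2 * b'))) := by
    rw [pnorm_smul, pnorm_smul, norm_inv, norm_inv, Complex.norm_natCast,
      Complex.norm_natCast]
    apply mul_le_mul_of_nonneg_left _ (by positivity)
    apply mul_le_mul_of_nonneg_left _ (by positivity)
    calc pnorm c n (∑ y ∈ Eset n k,
            ((∑ i ∈ Eset n r, Lmat n ^ (i + y)) - ∑ i ∈ Eset n r, Lmat n ^ i))
        ≤ ∑ y ∈ Eset n k, pnorm c n
            ((∑ i ∈ Eset n r, Lmat n ^ (i + y)) - ∑ i ∈ Eset n r, Lmat n ^ i) :=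
          pnorm_sum_le _ _
      _ ≤ ∑ y ∈ Eset n k, (2 * (b':ℝ)) := by
          apply Finset.sum_le_sum
          intro y hy
          have hyb : y ≤ b' := by
            rw [hEk, Finset.mem_Icc] at hy
            exact hy.2
          calc pnorm c n ((∑ i ∈ Eset n r, Lmat n ^ (i + y)) - ∑ i ∈ Eset n r, Lmat n ^ i)
              ≤ 2 * (y:ℝ) := by rw [hEr]; exact pnorm_shift_sub_le hc1 a b y
            _ ≤ 2 * (b':ℝ) := by
                have : (y:ℝ) ≤ (b':ℝ) := by exact_mod_cast hyb
                linarith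
      _ = (ν:ℝ) * (2 * b') := by rw [Finset.sum_const, nsmul_eq_mul]
  refine le_trans step ?_
  -- numeric computation
  have hμlow : (n:ℝ)/(2*r) ≤ (μ:ℝ) := by
    have haR : (a:ℝ) < (n:ℝ)/r + 1 := Nat.ceil_lt_add_one (by positivity)
    have hbR : 2*(n:ℝ)/r - 1 < (b:ℝ) := Nat.sub_one_lt_floor _
    have hμR2 : (μ:ℝ) = (b:ℝ) + 1 - (a:ℝ) := by
      rw [hμcard]
      push_cast [Nat.cast_sub (by omega : a ≤ b + 1)]
      ring
    have hμ1 : (1:ℝ) ≤ (μ:ℝ) := by exact_mod_cast hμpos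
    have h2 : 2*(n:ℝ)/r = (n:ℝ)/r + (n:ℝ)/r := by ring
    have h3 : (n:ℝ)/(2*r) = ((n:ℝ)/r)/2 := by
      rw [div_div, mul_comm]
    rcases le_or_gt ((n:ℝ)/r) 2 with hcase | hcase
    · rw [h3]; linarith
    · rw [h3]; linarith
  have hμinv : (μ:ℝ)⁻¹ ≤ 2*(r:ℝ)/(n:ℝ) := by
    have h0 : (0:ℝ) < (n:ℝ)/(2*r) := by positivity
    calc (μ:ℝ)⁻¹ ≤ ((n:ℝ)/(2*r))⁻¹ := by
          apply inv_anti₀ h0 hμlow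
      _ = 2*(r:ℝ)/(n:ℝ) := by field_simp
  have hfin : (ν:ℝ)⁻¹ * (ν * (2 * b')) = 2 * (b':ℝ) := by
    field_simp
  rw [hfin]
  calc (μ:ℝ)⁻¹ * (2 * (b':ℝ)) ≤ (2*(r:ℝ)/(n:ℝ)) * (2 * (2*(n:ℝ)/k)) := by
        apply mul_le_mul hμinv (by linarith) (by positivity) (by positivity)
    _ = 8 * r / k := by field_simp; ring

lemma sum_entries_Lpow (s : ℕ) :
    (∑ i : Fin n, ∑ j : Fin n, (Lmat n ^ s) i j) = ((n - s : ℕ) : ℂ) := by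
  have h1 : ∀ i : Fin n, (∑ j : Fin n, (Lmat n ^ s) i j)
      = if (i:ℕ)+s < n then (1:ℂ) else 0 := by
    intro i
    simp only [Lpow_apply]
    rw [Fin.sum_univ_eq_sum_range (fun j => if (i:ℕ)+s = j then (1:ℂ) else 0)]
    rw [Finset.sum_ite_eq (Finset.range n) ((i:ℕ)+s) (fun _ => (1:ℂ))]
    simp [Finset.mem_range]
  simp only [h1]
  rw [Fin.sum_univ_eq_sum_range (fun i => if i+s < n then (1:ℂ) else 0)]
  rw [Finset.sum_boole]
  have h2 : (Finset.range n).filter (fun i => i+s < n) = Finset.range (n-s) := by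
    ext x
    simp only [Finset.mem_filter, Finset.mem_range]
    omega
  rw [h2, Finset.card_range]

lemma inner_ones_mul (A : Matrix (Fin n) (Fin n) ℂ) :
    (inner ℂ ((WithLp.equiv 2 (Fin n → ℂ)).symm (fun _ => (1:ℂ)))
      (Matrix.toEuclideanCLM (𝕜 := ℂ) A ((WithLp.equiv 2 (Fin n → ℂ)).symm (fun _ => (1:ℂ)))) : ℂ)
    = ∑ i : Fin n, ∑ j : Fin n, A i j := by
  rw [WithLp.equiv_symm_apply, Matrix.toEuclideanCLM_toLp, PiLp.inner_apply]
  apply Finset.sum_congr rfl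
  intro i _
  simp only [RCLike.inner_apply, PiLp.toLp_apply, map_one, one_mul]
  rw [Matrix.mulVec, dotProduct]
  simp

set_option maxHeartbeats 1000000 in
lemma norm_u3_ge {r : ℕ} (hr : 12 ≤ r) (hn : 1 ≤ n) :
    (1:ℝ)/2 ≤ ‖umat n r ^ 3‖ := by
  by_cases hrn : r ≤ n
  · -- main case
    have hr1 : 1 ≤ r := by omega
    have hrR : (0:ℝ) < r := by positivity
    have hnR : (0:ℝ) < n := by positivity
    set b := ⌊2*(n:ℝ)/r⌋₊ with hbdef
    have hE : Eset n r = Finset.Icc ⌈(n:ℝ)/r⌉₊ b := Eset_eq hr1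
    set E := Eset n r with hEdef
    set μ := E.card with hμdef
    have hμpos : 0 < μ := by
      rw [hμdef, hE, Nat.card_Icc]
      have := ceil_le_floor (n := n) hr1 hrn
      omega
    have hμR : (0:ℝ) < μ := by positivity
    have hbR : (b:ℝ) ≤ 2*(n:ℝ)/r := Nat.floor_le (by positivity)
    -- the cube as a triple sum
    have hA : umat n r ^ 3 = ((μ:ℂ)⁻¹)^3 •
        ∑ i ∈ E, ∑ j ∈ E, ∑ l ∈ E, Lmat n ^ (i+j+l) := by
      rw [umat, if_pos hrn, smul_pow]
      congr 1
      rw [pow_three']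
      rw [Finset.sum_mul_sum, Finset.sum_mul]
      simp_rw [Finset.sum_mul, Finset.mul_sum, ← pow_add]
      rfl
    -- the test vector
    set w : EuclideanSpace ℂ (Fin n) := (WithLp.equiv 2 (Fin n → ℂ)).symm (fun _ => (1:ℂ))
      with hwdef
    have hwnorm : ‖w‖ = Real.sqrt n := by
      rw [EuclideanSpace.norm_eq]
      congr 1
      have : ∀ i : Fin n, ‖w i‖^2 = 1 := by
        intro i
        rw [hwdef, WithLp.equiv_symm_apply, PiLp.toLp_apply]
        norm_num
      rw [Finset.sum_congr rfl (fun i _ => this i)]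
      simp
    -- the inner product
    set N : ℕ := ∑ i ∈ E, ∑ j ∈ E, ∑ l ∈ E, (n - (i+j+l)) with hNdef
    have hinner : (inner ℂ w (Matrix.toEuclideanCLM (𝕜 := ℂ) (umat n r ^ 3) w) : ℂ)
        = ((μ:ℂ)⁻¹)^3 * (N:ℂ) := by
      rw [hA, map_smul, ContinuousLinearMap.smul_apply, inner_smul_right]
      congr 1
      rw [map_sum]
      simp_rw [map_sum, ContinuousLinearMap.sum_apply, inner_sum]
      rw [hwdef]
      simp_rw [inner_ones_mul, sum_entries_Lpow]
      rw [hNdef]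
      push_cast
      rfl
    -- lower bound for N
    have hterm : ∀ i ∈ E, ∀ j ∈ E, ∀ l ∈ E, (n:ℝ)/2 ≤ ((n - (i+j+l) : ℕ):ℝ) := by
      intro i hi j hj l hl
      rw [hE, Finset.mem_Icc] at hi hj hl
      have hib : (i:ℝ) ≤ b := by exact_mod_cast hi.2
      have hjb : (j:ℝ) ≤ b := by exact_mod_cast hj.2
      have hlb : (l:ℝ) ≤ b := by exact_mod_cast hl.2
      have hs : ((i+j+l : ℕ):ℝ) ≤ 6*(n:ℝ)/r := by
        push_cast
        have : 6*(n:ℝ)/r = 3*(2*(n:ℝ)/r) := by ring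
        rw [this]
        linarith
      have hs2 : ((i+j+l : ℕ):ℝ) ≤ (n:ℝ)/2 := by
        have h6 : 6*(n:ℝ)/r ≤ 6*(n:ℝ)/12 := by
          apply div_le_div_of_nonneg_left (by positivity) (by norm_num)
          exact_mod_cast hr
        have : 6*(n:ℝ)/12 = (n:ℝ)/2 := by ring
        linarith
      have hsn : (i+j+l : ℕ) ≤ n := by
        have : ((i+j+l : ℕ):ℝ) ≤ (n:ℝ) := by linarith
        exact_mod_cast this
      rw [Nat.cast_sub hsn]
      push_cast at hs2 ⊢
      linarith
    have hNlow : (μ:ℝ)^3 * ((n:ℝ)/2) ≤ (N:ℝ) := by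
      have hcast : (N:ℝ) = ∑ i ∈ E, ∑ j ∈ E, ∑ l ∈ E, ((n - (i+j+l) : ℕ):ℝ) := by
        rw [hNdef]; push_cast; rfl
      rw [hcast]
      calc (μ:ℝ)^3 * ((n:ℝ)/2) = ∑ _i ∈ E, ∑ _j ∈ E, ∑ _l ∈ E, ((n:ℝ)/2) := by
            simp only [Finset.sum_const, nsmul_eq_mul]
            ring
        _ ≤ ∑ i ∈ E, ∑ j ∈ E, ∑ l ∈ E, ((n - (i+j+l) : ℕ):ℝ) := by
            apply Finset.sum_le_sum; intro i hi
            apply Finset.sum_le_sum; intro j hj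
            apply Finset.sum_le_sum; intro l hl
            exact hterm i hi j hj l hl
    -- put it together
    have hnormval : ‖(inner ℂ w (Matrix.toEuclideanCLM (𝕜 := ℂ) (umat n r ^ 3) w) : ℂ)‖
        = ((μ:ℝ)⁻¹)^3 * (N:ℝ) := by
      rw [hinner, norm_mul, norm_pow, norm_inv, Complex.norm_natCast, Complex.norm_natCast]
    have hub : ‖(inner ℂ w (Matrix.toEuclideanCLM (𝕜 := ℂ) (umat n r ^ 3) w) : ℂ)‖
        ≤ (n:ℝ) * ‖umat n r ^ 3‖ := by
      calc ‖(inner ℂ w (Matrix.toEuclideanCLM (𝕜 := ℂ) (umat n r ^ 3) w) : ℂ)‖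
          ≤ ‖w‖ * ‖Matrix.toEuclideanCLM (𝕜 := ℂ) (umat n r ^ 3) w‖ := norm_inner_le_norm _ _
        _ ≤ ‖w‖ * (‖umat n r ^ 3‖ * ‖w‖) := by
            apply mul_le_mul_of_nonneg_left ?_ (norm_nonneg _)
            have h := (Matrix.toEuclideanCLM (𝕜 := ℂ) (umat n r ^ 3)).le_opNorm w
            rw [← Matrix.cstar_norm_def] at h
            exact h
        _ = (n:ℝ) * ‖umat n r ^ 3‖ := by
            rw [hwnorm]
            rw [show Real.sqrt n * (‖umat n r ^ 3‖ * Real.sqrt n)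
              = (Real.sqrt n * Real.sqrt n) * ‖umat n r ^ 3‖ from by ring]
            rw [Real.mul_self_sqrt (by positivity)]
    have hlow : (n:ℝ)/2 ≤ ((μ:ℝ)⁻¹)^3 * (N:ℝ) := by
      calc (n:ℝ)/2 = ((μ:ℝ)⁻¹)^3 * ((μ:ℝ)^3 * ((n:ℝ)/2)) := by
            field_simp
        _ ≤ ((μ:ℝ)⁻¹)^3 * (N:ℝ) := by
            apply mul_le_mul_of_nonneg_left hNlow (by positivity)
    rw [hnormval] at hub
    have hAnn : 0 ≤ ‖umat n r ^ 3‖ := norm_nonneg _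
    nlinarith
  · -- trivial case n < r
    rw [umat, if_neg hrn, one_pow]
    haveI : NeZero n := ⟨by omega⟩
    have h1 : ‖(1 : Matrix (Fin n) (Fin n) ℂ)‖ = 1 := by
      rw [Matrix.cstar_norm_def, map_one]
      exact ContinuousLinearMap.norm_id
    rw [h1]
    norm_num

end Stmt6Aux
/-- Fix an integer `r ≥ 12` (so `1 − 6/r ≥ 1/2`). For every bounded sequence
`α = (α_n)_{n≥1}` of complex numbers: (i) the sequence `(α_n u_{n,r}³)_n` belongs to `A`; and
(ii) `(1/2) sup_n |α_n| ≤ sup_n p_n(α_n u_{n,r}³) ≤ sup_n |α_n|` (sups over `n ≥ 1`).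
In particular `α ↦ (α_n u_{n,r}³)` is a bicontinuous linear injection of `ℓ^∞` into `A`. -/
theorem stmt6 (c : ℕ → ℝ) (hmono : StrictMono c) (hone : ∀ n, 1 < c n)
    (hunbdd : ∀ M : ℝ, ∃ n, M < c n) (r : ℕ) (hr : 12 ≤ r)
    (α : ℕ → ℂ) (hα : ∃ M : ℝ, ∀ n, ‖α n‖ ≤ M) :
    memA c (fun n => α n • umat n r ^ 3) ∧
    (1 / 2) * (⨆ n : ℕ, ‖α (n + 1)‖) ≤
      (⨆ n : ℕ, pnorm c (n + 1) (α (n + 1) • umat (n + 1) r ^ 3)) ∧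
    (⨆ n : ℕ, pnorm c (n + 1) (α (n + 1) • umat (n + 1) r ^ 3)) ≤
      ⨆ n : ℕ, ‖α (n + 1)‖ := by
  obtain ⟨M, hM⟩ := hα
  have hM0 : 0 ≤ M := le_trans (norm_nonneg (α 0)) (hM 0)
  have hu3 : ∀ n k : ℕ, pnorm c n (umat n k ^ 3) ≤ 1 := by
    intro n k
    have h1 := Stmt6Aux.pnorm_umat_le (hone n) k
    have hnn := Stmt6Aux.pnorm_nonneg (c := c) (umat n k)
    have hc0 : c n ≠ 0 := by have := hone n; positivity
    calc pnorm c n (umat n k ^ 3)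
        = pnorm c n (umat n k * umat n k * umat n k) := by rw [pow_three']
      _ ≤ pnorm c n (umat n k * umat n k) * pnorm c n (umat n k) :=
          Stmt6Aux.pnorm_mul_le hc0 _ _
      _ ≤ (pnorm c n (umat n k) * pnorm c n (umat n k)) * pnorm c n (umat n k) := by
          apply mul_le_mul_of_nonneg_right (Stmt6Aux.pnorm_mul_le hc0 _ _) hnn
      _ ≤ (1 * 1) * 1 := by
          apply mul_le_mul (mul_le_mul h1 h1 hnn zero_le_one) h1 hnn (by norm_num)
      _ = 1 := by norm_num
  have hTle : ∀ n, pnorm c n (α n • umat n r ^ 3) ≤ ‖α n‖ := by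
    intro n
    rw [Stmt6Aux.pnorm_smul]
    calc ‖α n‖ * pnorm c n (umat n r ^ 3) ≤ ‖α n‖ * 1 :=
          mul_le_mul_of_nonneg_left (hu3 n r) (norm_nonneg _)
      _ = ‖α n‖ := mul_one _
  have hTge : ∀ n, 1 ≤ n → ‖α n‖ ≤ 2 * pnorm c n (α n • umat n r ^ 3) := by
    intro n hn
    have h1 : (1:ℝ)/2 ≤ ‖umat n r ^ 3‖ := Stmt6Aux.norm_u3_ge hr hn
    have h2 : ‖α n • umat n r ^ 3‖ ≤ pnorm c n (α n • umat n r ^ 3) :=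
      Stmt6Aux.norm_le_pnorm _
    rw [norm_smul] at h2
    nlinarith [norm_nonneg (α n)]
  refine ⟨⟨⟨M, fun n => le_trans (hTle n) (hM n)⟩, ?_⟩, ?_, ?_⟩
  · -- approximate identity property
    intro ε hε
    refine ⟨max (r+1) (⌈16*(r:ℝ)*(M+1)/ε⌉₊ + 1), ?_⟩
    intro k hk n
    by_cases hkn : k ≤ n
    · have hrk : r + 1 ≤ k := le_trans (le_max_left _ _) hk
      have hrn : r ≤ n := by omega
      have hk1 : 1 ≤ k := by omega
      have hkR : (0:ℝ) < k := by positivity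
      have hc0 : c n ≠ 0 := by have := hone n; positivity
      have hkey : pnorm c n (umat n r * umat n k - umat n r) ≤ 8 * r / k :=
        Stmt6Aux.key (hone n) hr hrn hkn hk1
      have hcomm : umat n k * umat n r ^ 3 = umat n r ^ 3 * umat n k :=
        ((Commute.pow_right (Stmt6Aux.umat_comm (n := n) k r) 3)).eq
      have hfact : umat n r ^ 3 * umat n k - umat n r ^ 3
          = umat n r ^ 2 * (umat n r * umat n k - umat n r) := by noncomm_ring
      have hu2 : pnorm c n (umat n r ^ 2) ≤ 1 := by
        have h1 := Stmt6Aux.pnorm_umat_le (hone n) r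
        have hnn := Stmt6Aux.pnorm_nonneg (c := c) (umat n r)
        calc pnorm c n (umat n r ^ 2) = pnorm c n (umat n r * umat n r) := by rw [pow_two]
          _ ≤ pnorm c n (umat n r) * pnorm c n (umat n r) := Stmt6Aux.pnorm_mul_le hc0 _ _
          _ ≤ 1 * 1 := mul_le_mul h1 h1 hnn zero_le_one
          _ = 1 := by norm_num
      have hbound : pnorm c n (umat n r ^ 3 * umat n k - umat n r ^ 3) ≤ 8 * r / k := by
        rw [hfact]
        calc pnorm c n (umat n r ^ 2 * (umat n r * umat n k - umat n r))
            ≤ pnorm c n (umat n r ^ 2) * pnorm c n (umat n r * umat n k - umat n r) :=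
              Stmt6Aux.pnorm_mul_le hc0 _ _
          _ ≤ 1 * (8 * r / k) := by
              apply mul_le_mul hu2 hkey (Stmt6Aux.pnorm_nonneg _) zero_le_one
          _ = 8 * r / k := one_mul _
      have e1 : (α n • umat n r ^ 3) * umat n k - α n • umat n r ^ 3
          = α n • (umat n r ^ 3 * umat n k - umat n r ^ 3) := by
        rw [Matrix.smul_mul, smul_sub]
      have e2 : umat n k * (α n • umat n r ^ 3) - α n • umat n r ^ 3
          = α n • (umat n r ^ 3 * umat n k - umat n r ^ 3) := by
        rw [Matrix.mul_smul, hcomm, smul_sub]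
      rw [e1, e2, Stmt6Aux.pnorm_smul]
      have hαn : ‖α n‖ ≤ M := hM n
      have hx : 16*(r:ℝ)*(M+1)/ε < k := by
        have h1 : (16*(r:ℝ)*(M+1)/ε) ≤ (⌈16*(r:ℝ)*(M+1)/ε⌉₊ : ℝ) := Nat.le_ceil _
        have h2 : (⌈16*(r:ℝ)*(M+1)/ε⌉₊ + 1 : ℕ) ≤ k := le_trans (le_max_right _ _) hk
        have h3 : ((⌈16*(r:ℝ)*(M+1)/ε⌉₊ + 1 : ℕ) : ℝ) ≤ (k:ℝ) := by exact_mod_cast h2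
        push_cast at h3
        linarith
      have hrR : (0:ℝ) ≤ r := by positivity
      have h8 : (0:ℝ) ≤ 8 * r / k := by positivity
      have hfin : ‖α n‖ * pnorm c n (umat n r ^ 3 * umat n k - umat n r ^ 3) ≤ M * (8*r/k) := by
        apply mul_le_mul hαn hbound (Stmt6Aux.pnorm_nonneg _) hM0
      have hεk : 16 * M * (r:ℝ) ≤ ε * k := by
        have : ε * (16*(r:ℝ)*(M+1)/ε) < ε * k := by
          apply mul_lt_mul_of_pos_left hx hε
        rw [mul_div_cancel₀ _ (ne_of_gt hε)] at this
        nlinarith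
      have hsum : M * (8*(r:ℝ)/k) + M * (8*(r:ℝ)/k) ≤ ε := by
        rw [show M * (8*(r:ℝ)/k) + M * (8*(r:ℝ)/k) = (16*M*r)/k from by ring]
        rw [div_le_iff₀ hkR]
        nlinarith
      linarith [hfin]
    · have h1 : umat n k = 1 := by rw [umat, if_neg hkn]
      rw [h1, mul_one, one_mul, sub_self, Stmt6Aux.pnorm_zero]
      simp only [add_zero]
      exact le_of_lt hε
  · -- lower bound for the sup
    have hbddg : BddAbove (Set.range fun n : ℕ =>
        pnorm c (n+1) (α (n+1) • umat (n+1) r ^ 3)) := by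
      refine ⟨M, ?_⟩
      rintro x ⟨n, rfl⟩
      exact le_trans (hTle (n+1)) (hM (n+1))
    have h2 : (⨆ n : ℕ, ‖α (n+1)‖)
        ≤ 2 * ⨆ n : ℕ, pnorm c (n+1) (α (n+1) • umat (n+1) r ^ 3) := by
      apply ciSup_le
      intro n
      calc ‖α (n+1)‖ ≤ 2 * pnorm c (n+1) (α (n+1) • umat (n+1) r ^ 3) :=
            hTge (n+1) (by omega)
        _ ≤ 2 * ⨆ n : ℕ, pnorm c (n+1) (α (n+1) • umat (n+1) r ^ 3) := by
            have := le_ciSup hbddg n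
            linarith
    linarith
  · -- upper bound for the sup
    have hbddf : BddAbove (Set.range fun n : ℕ => ‖α (n+1)‖) := by
      refine ⟨M, ?_⟩
      rintro x ⟨n, rfl⟩
      exact hM (n+1)
    apply ciSup_le
    intro n
    exact le_trans (hTle (n+1)) (le_ciSup hbddf n)

end
end

section
/- Let c > 1 and let d ∈ M_n(ℂ) be the diagonal matrix with k-th diagonal entry c^k (1 ≤ k ≤ n). Then for every x ∈ M_n(ℂ): (i) |x_{ij}| ≤ c^{j−i} · max{‖x‖, ‖d x d^{-1}‖} for all indices i, j; and (ii) the strictly lower triangular part Δ_L x of x (the matrix obtained by replacing x_{ij} by 0 whenever i ≤ j) satisfies ‖Δ_L x‖ ≤ max{‖x‖, ‖d x d^{-1}‖}/(c − 1). -/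
noncomputable section

lemma coord_le {n : ℕ} (w : EuclideanSpace ℂ (Fin n)) (i : Fin n) : ‖w i‖ ≤ ‖w‖ := by
  rw [EuclideanSpace.norm_eq]
  rw [show ‖w i‖ = Real.sqrt (‖w i‖^2) from (Real.sqrt_sq (norm_nonneg _)).symm]
  exact Real.sqrt_le_sqrt
    (Finset.single_le_sum (f := fun j => ‖w j‖^2) (fun j _ => sq_nonneg _) (Finset.mem_univ i))

lemma entry_le {n : ℕ} (A : Matrix (Fin n) (Fin n) ℂ) (i j : Fin n) : ‖A i j‖ ≤ opNorm A := by
  set L := LinearMap.toContinuousLinearMap (Matrix.toEuclideanLin A) with hL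
  have h1 : ‖L (EuclideanSpace.single j (1:ℂ))‖ ≤ opNorm A := by
    have := L.le_opNorm (EuclideanSpace.single j (1:ℂ))
    rwa [EuclideanSpace.norm_single, norm_one, mul_one] at this
  refine le_trans ?_ (le_trans (coord_le _ i) h1)
  have : L (EuclideanSpace.single j (1:ℂ)) i = A i j := by
    simp [hL, Matrix.toEuclideanLin_apply, Matrix.mulVec, dotProduct,
      EuclideanSpace.single_apply]
  rw [this]

lemma schur {n : ℕ} (A : Matrix (Fin n) (Fin n) ℂ) {r : ℝ} (hr : 0 ≤ r)
    (hrow : ∀ i, ∑ j, ‖A i j‖ ≤ r) (hcol : ∀ j, ∑ i, ‖A i j‖ ≤ r) : opNorm A ≤ r := by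
  rw [opNorm]
  apply ContinuousLinearMap.opNorm_le_bound _ hr
  intro v
  set L := LinearMap.toContinuousLinearMap (Matrix.toEuclideanLin A) with hL
  have hv : ∀ i, L v i = ∑ j, A i j * v j := by
    intro i
    simp [hL, Matrix.toEuclideanLin_apply, Matrix.mulVec, dotProduct]
  have key : ∑ i, ‖L v i‖^2 ≤ r^2 * ∑ j, ‖v j‖^2 := by
    have step1 : ∀ i, ‖L v i‖^2 ≤ r * ∑ j, ‖A i j‖ * ‖v j‖^2 := by
      intro i
      have tri : ‖L v i‖ ≤ ∑ j, ‖A i j‖ * ‖v j‖ := by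
        rw [hv i]
        refine le_trans (norm_sum_le _ _) (le_of_eq ?_)
        exact Finset.sum_congr rfl fun j _ => norm_mul _ _
      have cs : (∑ j, ‖A i j‖ * ‖v j‖)^2 ≤ (∑ j, ‖A i j‖) * (∑ j, ‖A i j‖ * ‖v j‖^2) :=
        Finset.sum_sq_le_sum_mul_sum_of_sq_eq_mul _ (fun _ _ => norm_nonneg _)
          (fun _ _ => mul_nonneg (norm_nonneg _) (sq_nonneg _)) (fun j _ => by ring)
      calc ‖L v i‖^2 ≤ (∑ j, ‖A i j‖ * ‖v j‖)^2 := by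
            exact pow_le_pow_left₀ (norm_nonneg _) tri 2
        _ ≤ (∑ j, ‖A i j‖) * (∑ j, ‖A i j‖ * ‖v j‖^2) := cs
        _ ≤ r * ∑ j, ‖A i j‖ * ‖v j‖^2 := by
            apply mul_le_mul_of_nonneg_right (hrow i)
            exact Finset.sum_nonneg fun j _ => mul_nonneg (norm_nonneg _) (sq_nonneg _)
    calc ∑ i, ‖L v i‖^2 ≤ ∑ i, r * ∑ j, ‖A i j‖ * ‖v j‖^2 :=
          Finset.sum_le_sum fun i _ => step1 i
      _ = r * ∑ j, (∑ i, ‖A i j‖) * ‖v j‖^2 := by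
          rw [← Finset.mul_sum, Finset.sum_comm]
          congr 1
          exact Finset.sum_congr rfl fun j _ => (Finset.sum_mul _ _ _).symm
      _ ≤ r * ∑ j, r * ‖v j‖^2 := by
          apply mul_le_mul_of_nonneg_left _ hr
          exact Finset.sum_le_sum fun j _ =>
            mul_le_mul_of_nonneg_right (hcol j) (sq_nonneg _)
      _ = r^2 * ∑ j, ‖v j‖^2 := by rw [← Finset.mul_sum]; ring
  rw [EuclideanSpace.norm_eq, EuclideanSpace.norm_eq]
  calc Real.sqrt (∑ i, ‖L v i‖^2) ≤ Real.sqrt (r^2 * ∑ j, ‖v j‖^2) := Real.sqrt_le_sqrt key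
    _ = r * Real.sqrt (∑ j, ‖v j‖^2) := by
        rw [Real.sqrt_mul (sq_nonneg r), Real.sqrt_sq hr]

lemma geomtail (c : ℝ) (hc : 1 < c) (m : ℕ) :
    ∑ t ∈ Finset.range m, (1/c)^(t+1) ≤ 1/(c-1) := by
  have hc0 : (0:ℝ) < c := lt_trans one_pos hc
  have hc1 : (0:ℝ) < c - 1 := by linarith
  have sum_eq : ∀ k : ℕ, ∑ t ∈ Finset.range k, (1/c)^(t+1) = (1 - (1/c)^k)/(c-1) := by
    intro k
    induction k with
    | zero => simp
    | succ k ih =>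
        rw [Finset.sum_range_succ, ih]
        field_simp
        linear_combination (c⁻¹)^k * (mul_inv_cancel₀ hc0.ne')
  rw [sum_eq]
  have h2 : (0:ℝ) ≤ (1/c)^m := pow_nonneg (by positivity) m
  exact div_le_div₀ zero_le_one (by linarith) hc1 le_rfl

lemma rowgeom (c : ℝ) (hc : 1 < c) (n : ℕ) (i : Fin n) :
    ∑ j : Fin n, (if (j:ℕ) < (i:ℕ) then (1/c)^((i:ℕ)-(j:ℕ)) else 0) ≤ 1/(c-1) := by
  rw [Fin.sum_univ_eq_sum_range (fun j => if j < (i:ℕ) then (1/c)^((i:ℕ)-j) else 0) n]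
  have h1 : ∑ j ∈ Finset.range n, (if j < (i:ℕ) then (1/c)^((i:ℕ)-j) else 0)
      = ∑ j ∈ Finset.range (i:ℕ), (1/c)^((i:ℕ)-j) := by
    rw [← Finset.sum_filter]
    congr 1
    ext a
    simp only [Finset.mem_filter, Finset.mem_range]
    omega
  rw [h1, ← Finset.sum_range_reflect]
  have h2 : ∀ j ∈ Finset.range (i:ℕ), (1/c)^((i:ℕ)-((i:ℕ)-1-j)) = (1/c)^(j+1) := by
    intro j hj
    congr 1
    have := Finset.mem_range.mp hj
    omega
  rw [Finset.sum_congr rfl h2]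
  exact geomtail c hc _


lemma colgeom (c : ℝ) (hc : 1 < c) (n : ℕ) (j : Fin n) :
    ∑ i : Fin n, (if (j:ℕ) < (i:ℕ) then (1/c)^((i:ℕ)-(j:ℕ)) else 0) ≤ 1/(c-1) := by
  rw [Fin.sum_univ_eq_sum_range (fun i => if (j:ℕ) < i then (1/c)^(i-(j:ℕ)) else 0) n]
  have h1 : ∑ i ∈ Finset.range n, (if (j:ℕ) < i then (1/c)^(i-(j:ℕ)) else 0)
      = ∑ i ∈ Finset.Ico ((j:ℕ)+1) n, (1/c)^(i-(j:ℕ)) := by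
    rw [← Finset.sum_filter]
    congr 1
    ext a
    simp only [Finset.mem_filter, Finset.mem_range, Finset.mem_Ico]
    omega
  rw [h1, Finset.sum_Ico_eq_sum_range]
  have h2 : ∀ t ∈ Finset.range (n - ((j:ℕ)+1)), (1/c)^((j:ℕ)+1+t-(j:ℕ)) = (1/c)^(t+1) := by
    intro t _
    congr 1
    omega
  rw [Finset.sum_congr rfl h2]
  exact geomtail c hc _

/-- Let `c > 1` and `d ∈ M_n(ℂ)` diagonal with `k`-th entry `c^k`
(`1 ≤ k ≤ n`).  Then for every `x ∈ M_n(ℂ)`: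
(i) `|x_{ij}| ≤ c^{j−i} · max{‖x‖, ‖d x d⁻¹‖}` for all `i, j`; and
(ii) `‖Δ_L x‖ ≤ max{‖x‖, ‖d x d⁻¹‖}/(c − 1)`. -/
theorem stmt9 (n : ℕ) (c : ℝ) (hc : 1 < c)
    (d dinv : Matrix (Fin n) (Fin n) ℂ)
    (hd : d = Matrix.diagonal fun k : Fin n => ((c ^ ((k : ℕ) + 1) : ℝ) : ℂ))
    (hdinv : dinv = Matrix.diagonal fun k : Fin n => (((c ^ ((k : ℕ) + 1))⁻¹ : ℝ) : ℂ))
    (x : Matrix (Fin n) (Fin n) ℂ) :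
    (∀ i j : Fin n,
      ‖x i j‖ ≤ c ^ ((j : ℤ) - (i : ℤ)) * max (opNorm x) (opNorm (d * x * dinv))) ∧
    opNorm (lowerT x) ≤ max (opNorm x) (opNorm (d * x * dinv)) / (c - 1) := by
  have hc0 : (0:ℝ) < c := lt_trans one_pos hc
  have hcne : c ≠ 0 := ne_of_gt hc0
  set M : ℝ := max (opNorm x) (opNorm (d * x * dinv)) with hM
  have hM0 : 0 ≤ M := le_trans (norm_nonneg _) (le_max_left _ _)
  -- entry formula for the conjugated matrix
  have hconj : ∀ i j : Fin n,
      ‖(d * x * dinv) i j‖ = c ^ ((i:ℤ)+1) * (c ^ ((j:ℤ)+1))⁻¹ * ‖x i j‖ := by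
    intro i j
    have : (d * x * dinv) i j
        = ((c ^ ((i:ℕ) + 1) : ℝ) : ℂ) * x i j * (((c ^ ((j:ℕ) + 1))⁻¹ : ℝ) : ℂ) := by
      rw [hd, hdinv, Matrix.mul_diagonal, Matrix.diagonal_mul]
    rw [this]
    rw [norm_mul, norm_mul, Complex.norm_real, Complex.norm_real]
    rw [Real.norm_of_nonneg (by positivity), Real.norm_of_nonneg (by positivity)]
    rw [show ((i:ℤ)+1) = (((i:ℕ)+1 : ℕ) : ℤ) by push_cast; ring,
        show ((j:ℤ)+1) = (((j:ℕ)+1 : ℕ) : ℤ) by push_cast; ring,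
        zpow_natCast, zpow_natCast]
    ring
  -- part (i)
  have key : ∀ i j : Fin n, ‖x i j‖ ≤ c ^ ((j:ℤ) - (i:ℤ)) * M := by
    intro i j
    have h1 : ‖(d * x * dinv) i j‖ ≤ M := le_trans (entry_le _ i j) (le_max_right _ _)
    have h2 : ‖x i j‖ = c ^ ((j:ℤ) - (i:ℤ)) * ‖(d * x * dinv) i j‖ := by
      rw [hconj, ← mul_assoc, ← mul_assoc, ← zpow_neg, ← zpow_add₀ hcne, ← zpow_add₀ hcne]
      rw [show (j:ℤ) - (i:ℤ) + ((i:ℤ)+1) + -((j:ℤ)+1) = 0 by ring, zpow_zero, one_mul]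
    rw [h2]
    exact mul_le_mul_of_nonneg_left h1 (le_of_lt (zpow_pos hc0 _))
  refine ⟨key, ?_⟩
  -- part (ii)
  have key2 : ∀ i j : Fin n, (j:ℕ) < (i:ℕ) → ‖x i j‖ ≤ (1/c)^((i:ℕ)-(j:ℕ)) * M := by
    intro i j hij
    have he : c ^ ((j:ℤ) - (i:ℤ)) = (1/c)^((i:ℕ)-(j:ℕ)) := by
      rw [show (j:ℤ) - (i:ℤ) = -((((i:ℕ)-(j:ℕ) : ℕ)) : ℤ) by omega,
        zpow_neg, zpow_natCast, one_div, inv_pow]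
    rw [← he]
    exact key i j
  have hentry : ∀ i j : Fin n,
      ‖lowerT x i j‖ ≤ (if (j:ℕ) < (i:ℕ) then (1/c)^((i:ℕ)-(j:ℕ)) else 0) * M := by
    intro i j
    show ‖if j < i then x i j else 0‖ ≤ _
    rcases lt_or_ge j i with h | h
    · rw [if_pos h, if_pos (by exact h)]
      exact key2 i j h
    · rw [if_neg (not_lt.mpr h), if_neg (not_lt.mpr (by exact_mod_cast h)), norm_zero, zero_mul]
  apply schur _ (div_nonneg hM0 (by linarith))
  · intro i
    calc ∑ j, ‖lowerT x i j‖
        ≤ ∑ j : Fin n, (if (j:ℕ) < (i:ℕ) then (1/c)^((i:ℕ)-(j:ℕ)) else 0) * M :=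
          Finset.sum_le_sum fun j _ => hentry i j
      _ = (∑ j : Fin n, (if (j:ℕ) < (i:ℕ) then (1/c)^((i:ℕ)-(j:ℕ)) else 0)) * M :=
          (Finset.sum_mul _ _ _).symm
      _ ≤ (1/(c-1)) * M :=
          mul_le_mul_of_nonneg_right (rowgeom c hc n i) hM0
      _ = M / (c-1) := by ring
  · intro j
    calc ∑ i, ‖lowerT x i j‖
        ≤ ∑ i : Fin n, (if (j:ℕ) < (i:ℕ) then (1/c)^((i:ℕ)-(j:ℕ)) else 0) * M :=
          Finset.sum_le_sum fun i _ => hentry i j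
      _ = (∑ i : Fin n, (if (j:ℕ) < (i:ℕ) then (1/c)^((i:ℕ)-(j:ℕ)) else 0)) * M :=
          (Finset.sum_mul _ _ _).symm
      _ ≤ (1/(c-1)) * M :=
          mul_le_mul_of_nonneg_right (colgeom c hc n j) hM0
      _ = M / (c-1) := by ring

end
end
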